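/- arXiv:2402.06238 — 7 statements merged into one kernel-verified Lean document; each statement's English description precedes it below -/
import Mathlib

section
/- Let G be a finite group, N a normal subgroup of G, and let B = bᴳ and C = cᴳ be G-conjugacy classes of elements b, c ∈ N with coprime sizes. Then the product set BC equals CB, BC is a single G-conjugacy class contained in N, and |BC| divides |B|·|C|. -/
/-!
Identify `|xᴳ|` with the index of the centralizer `C(x)`. As the indices of `C(b)` and `C(c)` are
coprime, `C(b)` acts transitively on `G ⧸ C(c)`, i.e. `G = C(b) C(c)`. Writing `g⁻¹ h = u v` with
`u ∈ C(b)`, `v ∈ C(c)` gives `(g b g⁻¹) (h c h⁻¹) = (g u) (b c) (g u)⁻¹`, so `bᴳ cᴳ = (b c)ᴳ`,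
which is also the class of the conjugate `c b`. Finally `C(b) ∩ C(c) ≤ C(b c)`, and coprimality
makes the index of `C(b) ∩ C(c)` equal to `|bᴳ| |cᴳ|`.
-/

open scoped Pointwise

/-- The `G`-conjugacy class of `b`, as a set. -/
def gclass {G : Type*} [Group G] (b : G) : Set G := {y | ∃ g : G, g * b * g⁻¹ = y}

open Subgroup

namespace Subgroup

variable {G : Type*} [Group G] {H K : Subgroup G}

lemma relIndex_eq_index_of_coprime [K.FiniteIndex] (hcop : H.index.Coprime K.index) :
    K.relIndex H = K.index := by
  have hdvd : K.index ∣ K.relIndex H * H.index := by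
    rw [← inf_relIndex_left, relIndex_mul_index inf_le_left]
    exact index_dvd_of_le inf_le_right
  have hpos : 0 < K.relIndex H :=
    Nat.pos_of_ne_zero (FiniteIndex.index_ne_zero (H := K.subgroupOf H))
  refine le_antisymm ?_ (Nat.le_of_dvd hpos (hcop.symm.dvd_of_dvd_mul_right hdvd))
  simpa only [relIndex_top_right] using relIndex_le_of_le_right le_top
    (by simpa only [relIndex_top_right] using FiniteIndex.index_ne_zero)

lemma index_inf_eq_mul_of_coprime [K.FiniteIndex] (hcop : H.index.Coprime K.index) :
    (H ⊓ K).index = H.index * K.index := by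
  rw [← relIndex_mul_index inf_le_left, inf_relIndex_left,
    relIndex_eq_index_of_coprime hcop, mul_comm]

lemma exists_mul_eq_of_relIndex_eq_index [K.FiniteIndex] (hHK : K.relIndex H = K.index)
    (g : G) : ∃ h ∈ H, ∃ k ∈ K, h * k = g := by
  let f := quotientSubgroupOfEmbeddingOfLE K (le_top : H ≤ ⊤)
  have hcard :
      Nat.card (↥(⊤ : Subgroup G) ⧸ K.subgroupOf ⊤) ≤ Nat.card (H ⧸ K.subgroupOf H) :=
    (relIndex_top_right K).trans hHK.symm |>.le
  obtain ⟨q, hq⟩ := (f.injective.bijective_of_nat_card_le hcard).surjective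
    (QuotientGroup.mk ⟨g, mem_top g⟩)
  induction q using QuotientGroup.induction_on with
  | H h =>
    have hk : (h : G)⁻¹ * g ∈ K := by
      simpa [f, QuotientGroup.eq, mem_subgroupOf] using hq
    exact ⟨h, h.2, (h : G)⁻¹ * g, hk, mul_inv_cancel_left _ _⟩

end Subgroup

section gclass

variable {G : Type*} [Group G]

lemma gclass_eq_orbit (x : G) : gclass x = MulAction.orbit (ConjAct G) x := by
  ext y
  rw [ConjAct.mem_orbit_conjAct, isConj_comm, isConj_iff]
  rfl

lemma natCard_gclass (x : G) : Nat.card (gclass x) = (centralizer {x}).index := by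
  rw [gclass_eq_orbit, Nat.card_coe_set_eq, ← MulAction.index_stabilizer,
    centralizer_eq_comap_stabilizer]
  exact (index_comap_of_surjective _ ConjAct.toConjAct.surjective).symm

lemma gclass_conj (g x : G) : gclass (g * x * g⁻¹) = gclass x := by
  ext y
  constructor
  · rintro ⟨k, rfl⟩
    exact ⟨k * g, by group⟩
  · rintro ⟨k, rfl⟩
    exact ⟨k * g⁻¹, by group⟩

lemma gclass_mul_subset_gclass_mul_gclass (b c : G) : gclass (b * c) ⊆ gclass b * gclass c := by
  rintro x ⟨g, rfl⟩
  exact ⟨g * b * g⁻¹, ⟨g, rfl⟩, g * c * g⁻¹, ⟨g, rfl⟩, by group⟩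

variable [Finite G] {b c : G}

lemma gclass_mul_gclass_of_coprime
    (hcop : Nat.Coprime (Nat.card (gclass b)) (Nat.card (gclass c))) :
    gclass b * gclass c = gclass (b * c) := by
  refine le_antisymm ?_ (gclass_mul_subset_gclass_mul_gclass b c)
  rw [natCard_gclass, natCard_gclass] at hcop
  rintro _ ⟨_, ⟨g, rfl⟩, _, ⟨h, rfl⟩, rfl⟩
  obtain ⟨u, hu, v, hv, huv⟩ :=
    exists_mul_eq_of_relIndex_eq_index (relIndex_eq_index_of_coprime hcop) (g⁻¹ * h)
  rw [mem_centralizer_singleton_iff] at hu hv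
  obtain rfl : h = g * u * v := by rw [mul_assoc, huv, mul_inv_cancel_left]
  refine ⟨g * u, ?_⟩
  calc g * u * (b * c) * (g * u)⁻¹ = g * (u * b) * (c * v) * v⁻¹ * u⁻¹ * g⁻¹ := by group
    _ = g * (b * u) * (v * c) * v⁻¹ * u⁻¹ * g⁻¹ := by rw [hu, hv]
    _ = g * b * g⁻¹ * (g * u * v * c * (g * u * v)⁻¹) := by group

lemma natCard_gclass_mul_dvd_of_coprime
    (hcop : Nat.Coprime (Nat.card (gclass b)) (Nat.card (gclass c))) :
    Nat.card (gclass (b * c)) ∣ Nat.card (gclass b) * Nat.card (gclass c) := by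
  rw [natCard_gclass, natCard_gclass] at hcop ⊢
  rw [natCard_gclass, ← index_inf_eq_mul_of_coprime hcop]
  refine index_dvd_of_le fun u hu => ?_
  rw [mem_inf, mem_centralizer_singleton_iff, mem_centralizer_singleton_iff] at hu
  exact mem_centralizer_singleton_iff.mpr (Commute.mul_right hu.1 hu.2)

end gclass

theorem stmt1_general {G : Type*} [Group G] [Finite G] (N : Subgroup G)
    (b c : G) (hb : b ∈ N) (hc : c ∈ N)
    (hcop : Nat.Coprime (Nat.card (gclass b)) (Nat.card (gclass c))) :
    gclass b * gclass c = gclass c * gclass b ∧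
    (∃ a ∈ N, gclass b * gclass c = gclass a) ∧
    Nat.card (gclass b * gclass c) ∣ Nat.card (gclass b) * Nat.card (gclass c) := by
  have hbc := gclass_mul_gclass_of_coprime hcop
  refine ⟨?_, ⟨b * c, N.mul_mem hb hc, hbc⟩, hbc ▸ natCard_gclass_mul_dvd_of_coprime hcop⟩
  rw [hbc, gclass_mul_gclass_of_coprime hcop.symm, ← gclass_conj b (c * b), mul_assoc,
    mul_inv_cancel_right]

theorem stmt1 {G : Type*} [Group G] [Finite G] (N : Subgroup G) (hN : N.Normal)
    (b c : G) (hb : b ∈ N) (hc : c ∈ N)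
    (hcop : Nat.Coprime (Nat.card (gclass b)) (Nat.card (gclass c))) :
    gclass b * gclass c = gclass c * gclass b ∧
    (∃ a ∈ N, gclass b * gclass c = gclass a) ∧
    Nat.card (gclass b * gclass c) ∣ Nat.card (gclass b) * Nat.card (gclass c) :=
  stmt1_general N b c hb hc hcop
end

section
/- Let G be a finite group and N a normal subgroup of G. The graph Γ_G(N), whose vertices are the non-central G-conjugacy classes of elements of N and whose edges join classes whose sizes share a prime divisor, has at most 2 connected components. -/
open scoped Classical

namespace BHMaux

variable {G : Type*} [Group G]

/-- The size of the conjugacy class of `x`. -/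
noncomputable def n (x : G) : ℕ := Nat.card (ConjClasses.mk x).carrier

lemma mem_carrier {x y : G} :
    y ∈ (ConjClasses.mk x).carrier ↔ ∃ g : G, g * x * g⁻¹ = y := by
  rw [ConjClasses.mem_carrier_iff_mk_eq, ConjClasses.mk_eq_mk_iff_isConj, isConj_comm, isConj_iff]

lemma n_eq_index (x : G) : n x = (Subgroup.centralizer {x}).index := by
  have h1 : Nat.card (ConjClasses.mk x).carrier = Nat.card (MulAction.orbit (ConjAct G) x) := by
    rw [ConjAct.orbit_eq_carrier_conjClasses]
  rw [n, h1, Nat.card_congr (MulAction.orbitEquivQuotientStabilizer (ConjAct G) x)]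
  rw [Subgroup.centralizer_eq_comap_stabilizer]
  exact (Subgroup.index_comap_of_surjective _ (MulEquiv.surjective _)).symm

lemma centralizer_inv (x : G) : Subgroup.centralizer {x⁻¹} = Subgroup.centralizer {x} := by
  ext g
  simp only [Subgroup.mem_centralizer_iff, Set.mem_singleton_iff, forall_eq]
  constructor
  · intro h
    have := congrArg (fun t => x * t * x) h
    simp only [mul_assoc] at this ⊢
    simpa [mul_assoc] using this.symm
  · intro h
    have := congrArg (fun t => x⁻¹ * t * x⁻¹) h
    simp only [mul_assoc] at this ⊢
    simpa [mul_assoc] using this.symm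

lemma n_inv (x : G) : n x⁻¹ = n x := by
  rw [n_eq_index, n_eq_index, centralizer_inv]

lemma mk_mul_comm (x y : G) : ConjClasses.mk (x * y) = ConjClasses.mk (y * x) := by
  rw [ConjClasses.mk_eq_mk_iff_isConj, isConj_iff]
  exact ⟨x⁻¹, by group⟩

lemma n_mul_comm (x y : G) : n (x * y) = n (y * x) := by
  rw [n, n, mk_mul_comm]

variable [Finite G]

lemma one_le_n (x : G) : 1 ≤ n x := by
  have hx : x ∈ (ConjClasses.mk x).carrier := mem_carrier.mpr ⟨1, by group⟩
  have hne : (ConjClasses.mk x).carrier.Nonempty := ⟨x, hx⟩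
  exact Nat.one_le_iff_ne_zero.mpr (Nat.card_ne_zero.mpr ⟨hne.to_subtype, inferInstance⟩)

lemma index_inf_eq {H K : Subgroup G} (hco : Nat.Coprime H.index K.index) :
    (H ⊓ K).index = H.index * K.index := by
  refine le_antisymm Subgroup.index_inf_le (Nat.le_of_dvd ?_ ?_)
  · exact Nat.pos_of_ne_zero (by
      simp [Nat.mul_ne_zero, Subgroup.index_ne_zero_of_finite])
  · exact Nat.Coprime.mul_dvd_of_dvd_of_dvd hco
      (Subgroup.index_dvd_of_le inf_le_left) (Subgroup.index_dvd_of_le inf_le_right)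

lemma cover {H K : Subgroup G} (hco : Nat.Coprime H.index K.index) (g : G) :
    ∃ u ∈ H, ∃ v ∈ K, g = u * v := by
  have heq := index_inf_eq hco
  have hrel : K.relIndex H * H.index = H.index * K.index := by
    rw [← heq, ← Subgroup.inf_relIndex_left, Subgroup.relIndex_mul_index inf_le_left]
  have hrel2 : K.relIndex H = K.index := by
    have hpos : 0 < H.index := Nat.pos_of_ne_zero Subgroup.index_ne_zero_of_finite
    apply Nat.eq_of_mul_eq_mul_right hpos
    rw [hrel, mul_comm]
  -- map H ⧸ K.subgroupOf H → G ⧸ K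
  let f : H ⧸ (K.subgroupOf H) → G ⧸ K :=
    Quotient.map' (fun h => (h : G)) (by
      intro h1 h2 hr
      rw [QuotientGroup.leftRel_apply] at hr ⊢
      simpa [Subgroup.mem_subgroupOf] using hr)
  have hinj : Function.Injective f := by
    intro q1 q2
    induction q1 using Quotient.inductionOn' with | h h1 =>
    induction q2 using Quotient.inductionOn' with | h h2 =>
    intro hq
    have hq' : (QuotientGroup.mk ((h1 : G)) : G ⧸ K) = QuotientGroup.mk ((h2 : G)) := hq
    rw [QuotientGroup.eq] at hq'
    apply Quotient.sound'
    rw [QuotientGroup.leftRel_apply]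
    simpa [Subgroup.mem_subgroupOf] using hq'
  have hcard : Nat.card (H ⧸ (K.subgroupOf H)) = Nat.card (G ⧸ K) := by
    have h3 : (K.subgroupOf H).index = K.relIndex H := rfl
    show (K.subgroupOf H).index = K.index
    rw [h3, hrel2]
  have hsurj : Function.Surjective f :=
    ((Nat.bijective_iff_injective_and_card f).mpr ⟨hinj, hcard⟩).surjective
  obtain ⟨q, hq⟩ := hsurj (QuotientGroup.mk g)
  induction q using Quotient.inductionOn' with | h h1 =>
  have hq' : QuotientGroup.mk ((h1 : G)) = (QuotientGroup.mk g : G ⧸ K) := hq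
  rw [QuotientGroup.eq] at hq'
  exact ⟨h1, h1.2, (h1 : G)⁻¹ * g, hq', by group⟩

lemma cover_n {a b : G} (hco : Nat.Coprime (n a) (n b)) (g : G) :
    ∃ u ∈ Subgroup.centralizer {a}, ∃ v ∈ Subgroup.centralizer {b}, g = u * v := by
  apply cover
  rwa [← n_eq_index, ← n_eq_index]

lemma conj_mul_conj {a b : G} (hco : Nat.Coprime (n a) (n b)) (g h : G) :
    (g * a * g⁻¹) * (h * b * h⁻¹) ∈ (ConjClasses.mk (a * b)).carrier := by
  obtain ⟨u, hu, v, hv, huv⟩ := cover_n hco.symm (h⁻¹ * g)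
  rw [Subgroup.mem_centralizer_iff] at hu hv
  have hub : b * u = u * b := hu b rfl
  have hva : a * v = v * a := hv a rfl
  have hg : g = h * (u * v) := by
    rw [← huv]; group
  subst hg
  rw [mem_carrier]
  refine ⟨h * u, ?_⟩
  have h1 : v * a * v⁻¹ = a := by
    rw [← hva]; group
  have h2 : u⁻¹ * b = b * u⁻¹ := by
    calc u⁻¹ * b = u⁻¹ * (b * u) * u⁻¹ := by group
    _ = u⁻¹ * (u * b) * u⁻¹ := by rw [hub]
    _ = b * u⁻¹ := by group
  calc h * u * (a * b) * (h * u)⁻¹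
      = h * u * a * (b * u⁻¹) * h⁻¹ := by group
    _ = h * u * a * (u⁻¹ * b) * h⁻¹ := by rw [← h2]
    _ = h * u * (v * a * v⁻¹) * (u⁻¹ * b) * h⁻¹ := by rw [h1]
    _ = h * (u * v) * a * (h * (u * v))⁻¹ * (h * b * h⁻¹) := by group

lemma card_dvd_mul {a b : G} (hco : Nat.Coprime (n a) (n b)) :
    n (a * b) ∣ n a * n b := by
  have hle : Subgroup.centralizer {a} ⊓ Subgroup.centralizer {b}
      ≤ Subgroup.centralizer {a * b} := by
    intro u hu
    rw [Subgroup.mem_inf] at hu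
    obtain ⟨hu1, hu2⟩ := hu
    rw [Subgroup.mem_centralizer_iff] at hu1 hu2 ⊢
    intro w hw
    rw [Set.mem_singleton_iff] at hw
    subst hw
    have h1 : a * u = u * a := hu1 a rfl
    have h2 : b * u = u * b := hu2 b rfl
    calc a * b * u = a * (u * b) := by rw [mul_assoc, h2]
      _ = u * a * b := by rw [← mul_assoc, h1]
      _ = u * (a * b) := by rw [mul_assoc]
  have hdvd := Subgroup.index_dvd_of_le hle
  rw [n_eq_index, n_eq_index, n_eq_index]
  calc (Subgroup.centralizer {a * b}).index
      ∣ (Subgroup.centralizer {a} ⊓ Subgroup.centralizer {b}).index := hdvd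
    _ = _ := index_inf_eq (by rwa [← n_eq_index, ← n_eq_index])

lemma le_n_mul_left {a b : G} (hco : Nat.Coprime (n a) (n b)) : n a ≤ n (a * b) := by
  have hf : ∀ x : (ConjClasses.mk a).carrier, (x : G) * b ∈ (ConjClasses.mk (a * b)).carrier := by
    rintro ⟨x, hx⟩
    obtain ⟨g, hg⟩ := mem_carrier.mp hx
    have := conj_mul_conj hco g 1
    simpa [hg] using this
  have hinj : Function.Injective (fun x : (ConjClasses.mk a).carrier =>
      (⟨(x : G) * b, hf x⟩ : (ConjClasses.mk (a * b)).carrier)) := by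
    intro x y hxy
    simp only [Subtype.mk.injEq, mul_left_inj] at hxy
    exact Subtype.ext hxy
  exact Nat.card_le_card_of_injective _ hinj

/-- Right-stabilizer of a set, as a subgroup (uses finiteness for inverses). -/
def rstab (A : Set G) : Subgroup G where
  carrier := {g | ∀ x ∈ A, x * g ∈ A}
  one_mem' := by simp
  mul_mem' := by
    intro g h hg hh x hx
    rw [← mul_assoc]
    exact hh _ (hg _ hx)
  inv_mem' := by
    intro g hg y hy
    have hinj : Function.Injective (fun x : A => (⟨(x : G) * g, hg _ x.2⟩ : A)) := by
      intro x y hxy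
      simp only [Subtype.mk.injEq, mul_left_inj] at hxy
      exact Subtype.ext hxy
    have hsurj := Finite.surjective_of_injective hinj
    obtain ⟨x, hx⟩ := hsurj ⟨y, hy⟩
    have hxy : (x : G) * g = y := congrArg Subtype.val hx
    rw [← hxy]
    simpa using x.2

lemma mem_rstab {A : Set G} {g : G} : g ∈ rstab A ↔ ∀ x ∈ A, x * g ∈ A := Iff.rfl

lemma card_dvd_of_rstab (A : Set G) (M : Subgroup G) (hM : ∀ x ∈ A, ∀ m ∈ M, x * m ∈ A) :
    Nat.card M ∣ Nat.card A := by
  classical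
  let π : G → G ⧸ M := QuotientGroup.mk
  let Q := π '' A
  have key : Nat.card A = Nat.card (Q × M) := by
    refine Nat.card_congr ?_
    refine Equiv.ofBijective (fun x =>
      (⟨⟨π x, ⟨x, x.2, rfl⟩⟩, ⟨(Quotient.out (π (x : G)))⁻¹ * x, ?_⟩⟩ : Q × M)) ?_
    · rw [← QuotientGroup.eq]
      exact (QuotientGroup.out_eq' (π (x : G)))
    · constructor
      · intro x y hxy
        simp only [Prod.mk.injEq, Subtype.mk.injEq] at hxy
        obtain ⟨h1, h2⟩ := hxy
        rw [show π x = π y from congrArg Subtype.val h1] at h2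
        exact Subtype.ext (mul_left_cancel h2)
      · rintro ⟨⟨q, hq⟩, ⟨m, hm⟩⟩
        obtain ⟨s, hs, hsq⟩ := hq
        have hout : Quotient.out q ∈ A := by
          have h2 : s⁻¹ * Quotient.out q ∈ M := by
            rw [← QuotientGroup.eq, QuotientGroup.out_eq']
            exact hsq
          have := hM s hs _ h2
          simpa [mul_assoc] using this
        refine ⟨⟨Quotient.out q * m, hM _ hout _ hm⟩, ?_⟩
        have hπ : π (Quotient.out q * m) = q := by
          show QuotientGroup.mk _ = q
          rw [QuotientGroup.mk_mul_of_mem _ hm]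
          exact QuotientGroup.out_eq' q
        simp only [Prod.mk.injEq, Subtype.mk.injEq]
        constructor
        · exact Subtype.ext hπ
        · rw [hπ]
          group
  rw [key, Nat.card_prod]
  exact Dvd.intro_left _ rfl

/-- The normal subgroup generated by quotients of conjugates of `b`. -/
def Mgrp (b : G) : Subgroup G :=
  Subgroup.closure {w : G | ∃ g h : G, w = (g * b * g⁻¹) * (h * b * h⁻¹)⁻¹}

lemma key {a b : G} (hco : Nat.Coprime (n a) (n b))
    (hE : Nat.Coprime (n (a * b)) (n b)) :
    n b ≤ Nat.card (Mgrp b) ∧ Nat.card (Mgrp b) ∣ n a := by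
  have h1 : n a ≤ n (a * b) := le_n_mul_left hco
  have h2 : n (a * b) ≤ n a := by
    have hco2 : Nat.Coprime (n (a * b)) (n b⁻¹) := by rwa [n_inv]
    have := le_n_mul_left hco2
    rwa [mul_inv_cancel_right] at this
  have hEa : n (a * b) = n a := le_antisymm h2 h1
  have hsurj : ∀ b' ∈ (ConjClasses.mk b).carrier, ∀ y ∈ (ConjClasses.mk (a * b)).carrier,
      ∃ x ∈ (ConjClasses.mk a).carrier, x * b' = y := by
    intro b' hb' y hy
    obtain ⟨h, hh⟩ := mem_carrier.mp hb'
    have hsub : (fun x => x * b') '' (ConjClasses.mk a).carrier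
        ⊆ (ConjClasses.mk (a * b)).carrier := by
      rintro _ ⟨x, hx, rfl⟩
      obtain ⟨g, hg⟩ := mem_carrier.mp hx
      have := conj_mul_conj hco g h
      rwa [hg, hh] at this
    have hfin : ((ConjClasses.mk (a * b)).carrier).Finite := Set.toFinite _
    have hcards : ((ConjClasses.mk (a * b)).carrier).ncard
        ≤ ((fun x => x * b') '' (ConjClasses.mk a).carrier).ncard := by
      rw [Set.ncard_image_of_injective _ (mul_left_injective b')]
      rw [← Nat.card_coe_set_eq, ← Nat.card_coe_set_eq]
      exact le_of_eq hEa
    have heq := Set.eq_of_subset_of_ncard_le hsub hcards hfin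
    rw [← heq] at hy
    obtain ⟨x, hx, hxy⟩ := hy
    exact ⟨x, hx, hxy⟩
  have hgen : ∀ w ∈ {w : G | ∃ g h : G, w = (g * b * g⁻¹) * (h * b * h⁻¹)⁻¹},
      ∀ x ∈ (ConjClasses.mk a).carrier, x * w ∈ (ConjClasses.mk a).carrier := by
    rintro w ⟨g, h, rfl⟩ x hx
    obtain ⟨g0, hg0⟩ := mem_carrier.mp hx
    have hxb : x * (g * b * g⁻¹) ∈ (ConjClasses.mk (a * b)).carrier := by
      have := conj_mul_conj hco g0 g
      rwa [hg0] at this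
    have hb2 : (h * b * h⁻¹) ∈ (ConjClasses.mk b).carrier := mem_carrier.mpr ⟨h, rfl⟩
    obtain ⟨x', hx', hxx'⟩ := hsurj _ hb2 _ hxb
    have hxw : x * ((g * b * g⁻¹) * (h * b * h⁻¹)⁻¹) = x' := by
      have hcan : x * ((g * b * g⁻¹) * (h * b * h⁻¹)⁻¹) * (h * b * h⁻¹)
          = x' * (h * b * h⁻¹) := by rw [hxx']; group
      exact mul_right_cancel hcan
    rw [hxw]; exact hx'
  have hMst : ∀ x ∈ (ConjClasses.mk a).carrier, ∀ m ∈ Mgrp b,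
      x * m ∈ (ConjClasses.mk a).carrier := by
    intro x hx m hm
    have hle : Mgrp b ≤ rstab ((ConjClasses.mk a).carrier) := by
      rw [Mgrp, Subgroup.closure_le]
      intro w hw
      rw [SetLike.mem_coe, mem_rstab]
      exact hgen w hw
    exact (mem_rstab).mp (hle hm) x hx
  constructor
  · have hf : ∀ y : (ConjClasses.mk b).carrier, (y : G) * b⁻¹ ∈ Mgrp b := by
      rintro ⟨y, hy⟩
      obtain ⟨g, hg⟩ := mem_carrier.mp hy
      apply Subgroup.subset_closure
      refine ⟨g, 1, ?_⟩
      show y * b⁻¹ = g * b * g⁻¹ * (1 * b * 1⁻¹)⁻¹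
      rw [← hg]; group
    have hinj : Function.Injective (fun y : (ConjClasses.mk b).carrier =>
        (⟨(y : G) * b⁻¹, hf y⟩ : Mgrp b)) := by
      intro x y hxy
      simp only [Subtype.mk.injEq, mul_left_inj] at hxy
      exact Subtype.ext hxy
    exact Nat.card_le_card_of_injective _ hinj
  · exact card_dvd_of_rstab _ _ hMst

end BHMaux

/-- Non-central `G`-conjugacy classes of elements of `N`. -/
def NCClass (G : Type*) [Group G] (N : Subgroup G) : Type _ :=
  {C : ConjClasses G // (∃ x ∈ N, ConjClasses.mk x = C) ∧ 1 < Nat.card C.carrier}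

/-- The graph `Γ_G(N)`: vertices are non-central `G`-classes of elements of `N`,
two classes adjacent iff their sizes are not coprime. -/
def GammaG (G : Type*) [Group G] (N : Subgroup G) : SimpleGraph (NCClass G N) where
  Adj B C := B ≠ C ∧ ¬ Nat.Coprime (Nat.card B.1.carrier) (Nat.card C.1.carrier)
  symm := ⟨fun B C h => ⟨h.1.symm, fun hc => h.2 hc.symm⟩⟩
  loopless := ⟨fun B h => h.1 rfl⟩

namespace BHMaux

variable {G : Type*} [Group G] [Finite G]

lemma coprime_of_ne_comp {N : Subgroup G} {u w : NCClass G N}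
    (h : (GammaG G N).connectedComponentMk u ≠ (GammaG G N).connectedComponentMk w) :
    Nat.Coprime (Nat.card u.1.carrier) (Nat.card w.1.carrier) := by
  by_contra hnc
  have hne : u ≠ w := fun he => h (by rw [he])
  have hadj : (GammaG G N).Adj u w := ⟨hne, hnc⟩
  exact h (SimpleGraph.ConnectedComponent.sound hadj.reachable)

lemma keyStep (N : Subgroup G) {x y : G} (hx : x ∈ N) (hy : y ∈ N)
    (u w : NCClass G N) (hux : ConjClasses.mk x = u.1) (hwy : ConjClasses.mk y = w.1)
    (hcomp : (GammaG G N).connectedComponentMk u ≠ (GammaG G N).connectedComponentMk w) :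
    (n y ≤ Nat.card (Mgrp y) ∧ Nat.card (Mgrp y) ∣ n x) ∨
    (n x ≤ Nat.card (Mgrp x) ∧ Nat.card (Mgrp x) ∣ n y) := by
  have hnx : 1 < n x := by rw [n, hux]; exact u.2.2
  have hny : 1 < n y := by rw [n, hwy]; exact w.2.2
  have hco : Nat.Coprime (n x) (n y) := by
    have := coprime_of_ne_comp hcomp
    rwa [n, n, hux, hwy]
  have hnE : 1 < n (x * y) := lt_of_lt_of_le hnx (le_n_mul_left hco)
  let vE : NCClass G N := ⟨ConjClasses.mk (x * y), ⟨x * y, N.mul_mem hx hy, rfl⟩, hnE⟩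
  obtain ⟨p, hp, hpd⟩ := Nat.exists_prime_and_dvd (Nat.ne_of_gt hnE)
  have hpxy : p ∣ n x * n y := hpd.trans (card_dvd_mul hco)
  have hcomp' : ∀ (z : NCClass G N), p ∣ Nat.card z.1.carrier →
      (GammaG G N).connectedComponentMk vE = (GammaG G N).connectedComponentMk z := by
    intro z hz
    by_cases hvz : vE = z
    · rw [hvz]
    · refine SimpleGraph.ConnectedComponent.sound (SimpleGraph.Adj.reachable ⟨hvz, ?_⟩)
      intro hcop
      have hg : p ∣ Nat.gcd (Nat.card vE.1.carrier) (Nat.card z.1.carrier) :=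
        Nat.dvd_gcd hpd hz
      rw [Nat.Coprime] at hcop
      rw [hcop] at hg
      exact hp.one_lt.ne' (Nat.dvd_one.mp hg)
  rcases (Nat.Prime.dvd_mul hp).mp hpxy with hpx | hpy
  · have hEu : (GammaG G N).connectedComponentMk vE = (GammaG G N).connectedComponentMk u :=
      hcomp' u (by rwa [← hux])
    have hEw : (GammaG G N).connectedComponentMk vE
        ≠ (GammaG G N).connectedComponentMk w := by
      rw [hEu]; exact hcomp
    have hcopE : Nat.Coprime (n (x * y)) (n y) := by
      have := coprime_of_ne_comp hEw
      rwa [n, n, hwy]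
    exact Or.inl (key hco hcopE)
  · have hEw : (GammaG G N).connectedComponentMk vE = (GammaG G N).connectedComponentMk w :=
      hcomp' w (by rwa [← hwy])
    have hEu : (GammaG G N).connectedComponentMk vE
        ≠ (GammaG G N).connectedComponentMk u := by
      rw [hEw]; intro hq; exact hcomp hq.symm
    have hcopE : Nat.Coprime (n (y * x)) (n x) := by
      have := coprime_of_ne_comp hEu
      rw [n_mul_comm]
      rwa [n, n, hux]
    exact Or.inr (key hco.symm hcopE)

lemma double {y : G} {nx nz : ℕ} (hco : Nat.Coprime nx nz) (hy : 1 < n y)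
    (h1 : n y ≤ Nat.card (Mgrp y) ∧ Nat.card (Mgrp y) ∣ nx)
    (h2 : n y ≤ Nat.card (Mgrp y) ∧ Nat.card (Mgrp y) ∣ nz) : False := by
  have hd : Nat.card (Mgrp y) ∣ Nat.gcd nx nz := Nat.dvd_gcd h1.2 h2.2
  rw [Nat.Coprime] at hco
  rw [hco] at hd
  have hle := Nat.le_of_dvd one_pos hd
  have := h1.1
  omega

lemma cycle {a b c : G} (hab : Nat.Coprime (n a) (n b)) (ha : 1 < n a)
    (h1 : n b ≤ Nat.card (Mgrp b) ∧ Nat.card (Mgrp b) ∣ n a)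
    (h2 : n c ≤ Nat.card (Mgrp c) ∧ Nat.card (Mgrp c) ∣ n b)
    (h3 : n a ≤ Nat.card (Mgrp a) ∧ Nat.card (Mgrp a) ∣ n c) : False := by
  have hb1 : 1 ≤ n b := one_le_n b
  have hc1 : 1 ≤ n c := one_le_n c
  have hba : n b ≤ n a := le_trans h1.1 (Nat.le_of_dvd (by omega) h1.2)
  have hcb : n c ≤ n b := le_trans h2.1 (Nat.le_of_dvd (by omega) h2.2)
  have hac : n a ≤ n c := le_trans h3.1 (Nat.le_of_dvd (by omega) h3.2)
  have heq : n a = n b := by omega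
  rw [Nat.Coprime, heq, Nat.gcd_self] at hab
  omega

end BHMaux

theorem stmt4 {G : Type*} [Group G] [Finite G] (N : Subgroup G) (hN : N.Normal) :
    Nat.card (GammaG G N).ConnectedComponent ≤ 2 := by
  haveI : Finite (NCClass G N) :=
    inferInstanceAs (Finite {C : ConjClasses G //
      (∃ x ∈ N, ConjClasses.mk x = C) ∧ 1 < Nat.card C.carrier})
  by_contra hlt
  push_neg at hlt
  haveI : Fintype (GammaG G N).ConnectedComponent := Fintype.ofFinite _
  rw [Nat.card_eq_fintype_card] at hlt
  obtain ⟨s, _hs_sub, hs3⟩ := Finset.exists_subset_card_eq (s := (Finset.univ : Finset (GammaG G N).ConnectedComponent)) (n := 3) (by rw [Finset.card_univ]; omega)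
  obtain ⟨c1, c2, c3, h12, h13, h23, rfl⟩ := Finset.card_eq_three.mp hs3
  obtain ⟨v1, hv1⟩ := c1.exists_rep
  obtain ⟨v2, hv2⟩ := c2.exists_rep
  obtain ⟨v3, hv3⟩ := c3.exists_rep
  have hc12 : (GammaG G N).connectedComponentMk v1 ≠ (GammaG G N).connectedComponentMk v2 := by
    show (Quot.mk _ v1 : (GammaG G N).ConnectedComponent) ≠ Quot.mk _ v2
    rw [hv1, hv2]; exact h12
  have hc13 : (GammaG G N).connectedComponentMk v1 ≠ (GammaG G N).connectedComponentMk v3 := by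
    show (Quot.mk _ v1 : (GammaG G N).ConnectedComponent) ≠ Quot.mk _ v3
    rw [hv1, hv3]; exact h13
  have hc23 : (GammaG G N).connectedComponentMk v2 ≠ (GammaG G N).connectedComponentMk v3 := by
    show (Quot.mk _ v2 : (GammaG G N).ConnectedComponent) ≠ Quot.mk _ v3
    rw [hv2, hv3]; exact h23
  obtain ⟨x, hxN, hx1⟩ := v1.2.1
  obtain ⟨y, hyN, hy1⟩ := v2.2.1
  obtain ⟨z, hzN, hz1⟩ := v3.2.1
  have hnx : 1 < BHMaux.n x := by rw [BHMaux.n, hx1]; exact v1.2.2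
  have hny : 1 < BHMaux.n y := by rw [BHMaux.n, hy1]; exact v2.2.2
  have hnz : 1 < BHMaux.n z := by rw [BHMaux.n, hz1]; exact v3.2.2
  have hco12 : Nat.Coprime (BHMaux.n x) (BHMaux.n y) := by
    have := BHMaux.coprime_of_ne_comp hc12
    rwa [BHMaux.n, BHMaux.n, hx1, hy1]
  have hco13 : Nat.Coprime (BHMaux.n x) (BHMaux.n z) := by
    have := BHMaux.coprime_of_ne_comp hc13
    rwa [BHMaux.n, BHMaux.n, hx1, hz1]
  have hco23 : Nat.Coprime (BHMaux.n y) (BHMaux.n z) := by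
    have := BHMaux.coprime_of_ne_comp hc23
    rwa [BHMaux.n, BHMaux.n, hy1, hz1]
  have R12 := BHMaux.keyStep N hxN hyN v1 v2 hx1 hy1 hc12
  have R23 := BHMaux.keyStep N hyN hzN v2 v3 hy1 hz1 hc23
  have R13 := BHMaux.keyStep N hxN hzN v1 v3 hx1 hz1 hc13
  rcases R12 with Dxy | Dyx <;> rcases R23 with Dyz | Dzy <;> rcases R13 with Dxz | Dzx
  · exact BHMaux.double hco12 hnz Dxz Dyz
  · exact BHMaux.cycle hco12 hnx Dxy Dyz Dzx
  · exact BHMaux.double hco13 hny Dxy Dzy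
  · exact BHMaux.double hco13 hny Dxy Dzy
  · exact BHMaux.double hco12.symm hnz Dyz Dxz
  · exact BHMaux.double hco23 hnx Dyx Dzx
  · exact BHMaux.cycle hco12.symm hny Dyx Dxz Dzy
  · exact BHMaux.double hco23 hnx Dyx Dzx
end

section
/- Let G be a finite group and N a normal subgroup of G. The dual graph Γ*_G(N), whose vertices are the primes dividing the size of some G-conjugacy class of an element of N, with p and q adjacent iff pq divides the size of some such class, has at most 2 connected components. -/
open scoped Classical

/-- Vertices of the dual graph: primes dividing the size of some `G`-class of an
element of `N`. -/
def GammaStarV (G : Type*) [Group G] (N : Subgroup G) : Type _ :=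
  {p : ℕ // p.Prime ∧ ∃ x ∈ N, p ∣ Nat.card (ConjClasses.mk x).carrier}

/-- The dual graph `Γ*_G(N)`: primes `p ≠ q` are adjacent iff `p*q` divides the size of
some `G`-class of an element of `N`. -/
def GammaStar (G : Type*) [Group G] (N : Subgroup G) : SimpleGraph (GammaStarV G N) where
  Adj p q := p ≠ q ∧ ∃ x ∈ N, (p.1 * q.1) ∣ Nat.card (ConjClasses.mk x).carrier
  symm := ⟨fun p q h => ⟨h.1.symm, by obtain ⟨x, hx, hd⟩ := h.2; exact ⟨x, hx, by rwa [mul_comm]⟩⟩⟩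
  loopless := ⟨fun p h => h.1 rfl⟩

namespace GammaAux

variable {G : Type*} [Group G] [Finite G]

/-- The size of the conjugacy class of `x`. -/
noncomputable def csize (x : G) : ℕ := Nat.card (ConjClasses.mk x).carrier

lemma mem_carrier {x b : G} : b ∈ (ConjClasses.mk x).carrier ↔ IsConj x b := by
  rw [ConjClasses.mem_carrier_iff_mk_eq, ConjClasses.mk_eq_mk_iff_isConj, isConj_comm]

lemma csize_pos (x : G) : 0 < csize x :=
  Nat.card_pos_iff.mpr ⟨⟨⟨x, mem_carrier.mpr (IsConj.refl x)⟩⟩, inferInstance⟩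

lemma csize_eq_index (x : G) : csize x = (Subgroup.centralizer {x}).index := by
  have h1 : (ConjClasses.mk x).carrier = MulAction.orbit (ConjAct G) x :=
    (ConjAct.orbit_eq_carrier_conjClasses x).symm
  rw [csize, h1, Nat.card_congr (MulAction.orbitEquivQuotientStabilizer (ConjAct G) x),
    Subgroup.centralizer_eq_comap_stabilizer]
  exact (Subgroup.index_comap_of_surjective _ (f := (ConjAct.toConjAct : G ≃* ConjAct G).toMonoidHom)
      (MulEquiv.surjective _)).symm

lemma isConj_inv {x b : G} (h : IsConj x b) : IsConj x⁻¹ b⁻¹ := by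
  obtain ⟨c, hc⟩ := isConj_iff.mp h
  exact isConj_iff.mpr ⟨c, by rw [← hc]; group⟩

lemma csize_inv (x : G) : csize x⁻¹ = csize x := by
  apply Nat.card_congr
  refine ⟨fun b => ⟨b.1⁻¹, ?_⟩, fun b => ⟨b.1⁻¹, ?_⟩,
    fun b => Subtype.ext (inv_inv _), fun b => Subtype.ext (inv_inv _)⟩
  · exact mem_carrier.mpr (by simpa using isConj_inv (mem_carrier.mp b.2))
  · exact mem_carrier.mpr (isConj_inv (mem_carrier.mp b.2))

lemma coprime_inf_index {H K : Subgroup G} (h : Nat.Coprime H.index K.index) :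
    (H ⊓ K).index = H.index * K.index := by
  have h1 : H.index ∣ (H ⊓ K).index := Subgroup.index_dvd_of_le inf_le_left
  have h2 : K.index ∣ (H ⊓ K).index := Subgroup.index_dvd_of_le inf_le_right
  have h3 : H.index * K.index ∣ (H ⊓ K).index := h.mul_dvd_of_dvd_of_dvd h1 h2
  exact le_antisymm Subgroup.index_inf_le
    (Nat.le_of_dvd (Nat.pos_of_ne_zero (H ⊓ K).index_ne_zero_of_finite) h3)

lemma exists_decomp {H K : Subgroup G} (h : Nat.Coprime H.index K.index) (g : G) :
    ∃ v ∈ K, ∃ u ∈ H, g = v * u := by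
  have hKne : K.index ≠ 0 := K.index_ne_zero_of_finite
  have hrel : (H ⊓ K).relIndex K * K.index = H.index * K.index := by
    rw [Subgroup.relIndex_mul_index inf_le_right, coprime_inf_index h]
  have hrel' : (H ⊓ K).relIndex K = H.index :=
    Nat.eq_of_mul_eq_mul_right (Nat.pos_of_ne_zero hKne) hrel
  set L : Subgroup K := (H ⊓ K).subgroupOf K with hL
  have hcomp : L ≤ Subgroup.comap K.subtype H := fun k hk =>
    (Subgroup.mem_subgroupOf.mp hk).1
  let ψ : K ⧸ L → G ⧸ H := fun q => Quotient.liftOn' q (fun k => ((k : G) : G ⧸ H))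
    (fun k1 k2 hrel => by
      have h12 : k1⁻¹ * k2 ∈ L := QuotientGroup.leftRel_apply.mp hrel
      rw [Subgroup.mem_subgroupOf] at h12
      refine QuotientGroup.eq.mpr ?_
      simpa using h12.1)
  have hinj : Function.Injective ψ := by
    intro q1 q2
    induction q1 using QuotientGroup.induction_on with | H k1 =>
    induction q2 using QuotientGroup.induction_on with | H k2 =>
    intro hEq
    have hEq' : ((k1 : G) : G ⧸ H) = ((k2 : G) : G ⧸ H) := hEq
    have hH : (k1 : G)⁻¹ * (k2 : G) ∈ H := QuotientGroup.eq.mp hEq'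
    refine QuotientGroup.eq.mpr ?_
    rw [Subgroup.mem_subgroupOf]
    exact ⟨hH, K.mul_mem (K.inv_mem k1.2) k2.2⟩
  have hcards : Nat.card (K ⧸ L) = Nat.card (G ⧸ H) := by
    have e1 : Nat.card (K ⧸ L) = (H ⊓ K).relIndex K := rfl
    rw [e1, hrel']; rfl
  have hsurj : Function.Surjective ψ :=
    ((Nat.bijective_iff_injective_and_card ψ).mpr ⟨hinj, hcards⟩).2
  obtain ⟨q, hq⟩ := hsurj ((g : G ⧸ H))
  obtain ⟨k, rfl⟩ := QuotientGroup.mk_surjective q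
  have hq' : ((k : G) : G ⧸ H) = (g : G ⧸ H) := hq
  have hH : (k : G)⁻¹ * g ∈ H := QuotientGroup.eq.mp hq'
  exact ⟨k, k.2, _, hH, (mul_inv_cancel_left _ _).symm⟩

lemma isConj_mul_of_coprime {x y a b : G} (h : Nat.Coprime (csize x) (csize y))
    (hxa : IsConj x a) (hyb : IsConj y b) : IsConj (x * y) (a * b) := by
  obtain ⟨g, hg⟩ := isConj_iff.mp hxa
  obtain ⟨hh, hhh⟩ := isConj_iff.mp hyb
  have hcop : Nat.Coprime (Subgroup.centralizer {y}).index (Subgroup.centralizer {x}).index := by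
    rw [← csize_eq_index, ← csize_eq_index]; exact h.symm
  obtain ⟨v, hv, u, hu, hk⟩ := exists_decomp hcop (g⁻¹ * hh)
  have hvx : x * v = v * x := Subgroup.mem_centralizer_iff.mp hv x rfl
  have huy : y * u = u * y := Subgroup.mem_centralizer_iff.mp hu y rfl
  rw [isConj_iff]
  refine ⟨g * v, ?_⟩
  have hhh2 : hh = g * (v * u) := by rw [← hk]; group
  rw [← hg, ← hhh, hhh2]
  have cx : ∀ w : G, v * (x * w) = x * (v * w) := by
    intro w; simp only [← mul_assoc]; rw [← hvx]
  have cy : ∀ w : G, u * (y * w) = y * (u * w) := by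
    intro w; simp only [← mul_assoc]; rw [← huy]
  simp only [mul_inv_rev, mul_assoc, inv_mul_cancel_left, mul_inv_cancel_left]
  rw [cy, mul_inv_cancel_left, cx]

lemma csize_mul_dvd {x y : G} (h : Nat.Coprime (csize x) (csize y)) :
    csize (x * y) ∣ csize x * csize y := by
  have hle : Subgroup.centralizer {x} ⊓ Subgroup.centralizer {y} ≤
      Subgroup.centralizer {x * y} := by
    rintro u ⟨hux, huy⟩
    have hux' : x * u = u * x := Subgroup.mem_centralizer_iff.mp hux x rfl
    have huy' : y * u = u * y := Subgroup.mem_centralizer_iff.mp huy y rfl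
    rw [Subgroup.mem_centralizer_iff]
    rintro h' hh'
    rw [Set.mem_singleton_iff] at hh'
    subst hh'
    rw [mul_assoc, huy', ← mul_assoc, hux', mul_assoc]
  calc csize (x * y) = (Subgroup.centralizer {x * y}).index := csize_eq_index _
    _ ∣ (Subgroup.centralizer {x} ⊓ Subgroup.centralizer {y}).index :=
        Subgroup.index_dvd_of_le hle
    _ = csize x * csize y := by
        rw [coprime_inf_index (by rw [← csize_eq_index, ← csize_eq_index]; exact h),
          ← csize_eq_index, ← csize_eq_index]

lemma le_csize_mul {x y : G} (h : Nat.Coprime (csize x) (csize y)) :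
    csize y ≤ csize (x * y) := by
  have hinj : Function.Injective (fun b : (ConjClasses.mk y).carrier =>
      (⟨x * b.1, mem_carrier.mpr
        (isConj_mul_of_coprime h (IsConj.refl x) (mem_carrier.mp b.2))⟩ :
        (ConjClasses.mk (x * y)).carrier)) := by
    intro b1 b2 hb
    have := congrArg Subtype.val hb
    exact Subtype.ext (mul_left_cancel this)
  exact Nat.card_le_card_of_injective _ hinj

lemma card_dvd_of_invariant (H : Subgroup G) (D : Set G)
    (hinv : ∀ h ∈ H, ∀ d ∈ D, h * d ∈ D) : Nat.card H ∣ D.ncard := by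
  have key : ∀ n : ℕ, ∀ D : Set G, (∀ h ∈ H, ∀ d ∈ D, h * d ∈ D) → D.ncard = n →
      Nat.card H ∣ n := by
    intro n
    induction n using Nat.strong_induction_on with
    | _ n ih =>
      intro D hinv hn
      rcases D.eq_empty_or_nonempty with rfl | ⟨d, hd⟩
      · rw [← hn, Set.ncard_empty]; exact dvd_zero _
      · set O : Set G := (fun h : G => h * d) '' (H : Set G) with hO
        have hd' : d ∈ O := ⟨1, H.one_mem, one_mul d⟩
        have hOD : O ⊆ D := by rintro _ ⟨h, hh, rfl⟩; exact hinv h hh d hd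
        have hOcard : O.ncard = Nat.card H := by
          rw [hO, Set.ncard_image_of_injective _ (mul_left_injective d)]
          simp [← Nat.card_coe_set_eq]
        have hinv' : ∀ h ∈ H, ∀ e ∈ D \ O, h * e ∈ D \ O := by
          rintro h hh e ⟨heD, heO⟩
          refine ⟨hinv h hh e heD, fun hmem => heO ?_⟩
          obtain ⟨h', hh', hEq⟩ := hmem
          refine ⟨h⁻¹ * h', H.mul_mem (H.inv_mem hh) hh', ?_⟩
          have hEq' : h' * d = h * e := hEq
          show h⁻¹ * h' * d = e
          rw [mul_assoc, hEq', inv_mul_cancel_left]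
        have hfin : D.Finite := Set.toFinite D
        have hlt : (D \ O).ncard < n := by
          rw [← hn]
          refine Set.ncard_lt_ncard ?_ hfin
          refine Set.ssubset_iff_subset_ne.mpr ⟨Set.diff_subset, fun hEq => ?_⟩
          have hdo : d ∈ D \ O := by rw [hEq]; exact hd
          exact hdo.2 hd'
        have hdvd := ih _ hlt (D \ O) hinv' rfl
        have hsplit : (D \ O).ncard + O.ncard = D.ncard :=
          Set.ncard_diff_add_ncard_of_subset hOD hfin
        rw [← hn, ← hsplit]
        exact Nat.dvd_add hdvd (hOcard ▸ dvd_refl _)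
  exact key D.ncard D hinv rfl

end GammaAux

open GammaAux in
theorem stmt5 {G : Type*} [Group G] [Finite G] (N : Subgroup G) (hN : N.Normal) :
    Nat.card (GammaStar G N).ConnectedComponent ≤ 2 := by
  classical
  by_contra hcard
  push_neg at hcard
  have hfin : Finite ((GammaStar G N).ConnectedComponent) :=
    (Nat.card_pos_iff.mp (lt_trans (by norm_num) hcard)).2
  have hFt : Fintype ((GammaStar G N).ConnectedComponent) := Fintype.ofFinite _
  rw [Nat.card_eq_fintype_card, ← Finset.card_univ] at hcard
  obtain ⟨c1, c2, c3, -, -, -, h12, h13, h23⟩ := Finset.two_lt_card_iff.mp hcard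
  set cmk : GammaStarV G N → (GammaStar G N).ConnectedComponent :=
    (GammaStar G N).connectedComponentMk with hcmk
  obtain ⟨p, hp⟩ := c1.exists_rep
  obtain ⟨q, hq⟩ := c2.exists_rep
  obtain ⟨r, hr⟩ := c3.exists_rep
  have hp' : cmk p = c1 := hp
  have hq' : cmk q = c2 := hq
  have hr' : cmk r = c3 := hr
  rw [← hp', ← hq'] at h12
  rw [← hp', ← hr'] at h13
  rw [← hq', ← hr'] at h23
  -- every vertex has a witness class
  have hvert : ∀ v : GammaStarV G N, ∃ x, x ∈ N ∧ v.1 ∣ csize x ∧ 1 < csize x := by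
    rintro ⟨vp, hvp, x, hxN, hdvd⟩
    exact ⟨x, hxN, hdvd, lt_of_lt_of_le hvp.one_lt (Nat.le_of_dvd (csize_pos x) hdvd)⟩
  -- minimal noncentral class size
  set M : Set ℕ := {n | 1 < n ∧ ∃ x ∈ N, csize x = n} with hM
  have hMne : M.Nonempty := by
    obtain ⟨x, hxN, -, h1⟩ := hvert p
    exact ⟨csize x, h1, x, hxN, rfl⟩
  obtain ⟨hm1, a, haN, hcsa⟩ := Nat.sInf_mem hMne
  set m := sInf M with hmdef
  have hmin : ∀ y, y ∈ N → 1 < csize y → m ≤ csize y := fun y hy h1 =>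
    Nat.sInf_le ⟨h1, y, hy, rfl⟩
  obtain ⟨s₀, hs₀p, hs₀d⟩ := Nat.exists_prime_and_dvd (show m ≠ 1 by omega)
  have hs₀a : s₀ ∣ csize a := hcsa ▸ hs₀d
  let vs₀ : GammaStarV G N := ⟨s₀, hs₀p, a, haN, hs₀a⟩
  set K := cmk vs₀ with hK
  -- two vertices dividing the same class size lie in the same component
  have adj_of : ∀ (v w : GammaStarV G N) (x : G), x ∈ N → v.1 ∣ csize x → w.1 ∣ csize x →
      cmk v = cmk w := by
    intro v w x hxN hvd hwd
    by_cases hvw : v = w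
    · rw [hvw]
    · have hne : v.1 ≠ w.1 := fun hval => hvw (Subtype.ext hval)
      have hadj : (GammaStar G N).Adj v w :=
        And.intro hvw ⟨x, hxN, Nat.Coprime.mul_dvd_of_dvd_of_dvd
          ((Nat.coprime_primes v.2.1 w.2.1).mpr hne) hvd hwd⟩
      exact SimpleGraph.ConnectedComponent.sound hadj.reachable
  have primeofm : ∀ s : GammaStarV G N, s.1 ∣ m → cmk s = K := fun s hs =>
    adj_of s vs₀ a haN (hcsa ▸ hs) hs₀a
  -- pick two vertices outside K in different components
  have pick : ∃ t u : GammaStarV G N, cmk t ≠ K ∧ cmk u ≠ K ∧ cmk t ≠ cmk u := by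
    by_cases h1 : cmk p = K
    · exact ⟨q, r, by rw [← h1]; exact fun h => h12 h.symm,
        by rw [← h1]; exact fun h => h13 h.symm, h23⟩
    · by_cases h2 : cmk q = K
      · exact ⟨p, r, h1, by rw [← h2]; exact fun h => h23 h.symm, h13⟩
      · exact ⟨p, q, h1, h2, h12⟩
  obtain ⟨t, u, htK, huK, htu⟩ := pick
  obtain ⟨y, hyN, hty, hy1⟩ := hvert t
  obtain ⟨w, hwN, huw, hw1⟩ := hvert u
  -- coprimality facts
  have hcop_m : ∀ (v : GammaStarV G N) (z : G), z ∈ N → v.1 ∣ csize z → cmk v ≠ K →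
      Nat.Coprime m (csize z) := by
    intro v z hzN hvd hvK
    by_contra hc
    obtain ⟨s, hsp, hsd⟩ := Nat.exists_prime_and_dvd hc
    have hsm : s ∣ m := hsd.trans (Nat.gcd_dvd_left _ _)
    have hsz : s ∣ csize z := hsd.trans (Nat.gcd_dvd_right _ _)
    let vs : GammaStarV G N := ⟨s, hsp, z, hzN, hsz⟩
    have e1 : cmk vs = K := primeofm vs hsm
    have e2 : cmk vs = cmk v := adj_of vs v z hzN hsz hvd
    exact hvK (e2.symm.trans e1)
  have hcopy : Nat.Coprime m (csize y) := hcop_m t y hyN hty htK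
  have hcopw : Nat.Coprime m (csize w) := hcop_m u w hwN huw huK
  have hcopyw : Nat.Coprime (csize y) (csize w) := by
    by_contra hc
    obtain ⟨s, hsp, hsd⟩ := Nat.exists_prime_and_dvd hc
    let vs : GammaStarV G N := ⟨s, hsp, y, hyN, hsd.trans (Nat.gcd_dvd_left _ _)⟩
    have e1 : cmk vs = cmk t := adj_of vs t y hyN (hsd.trans (Nat.gcd_dvd_left _ _)) hty
    have e2 : cmk vs = cmk u := adj_of vs u w hwN (hsd.trans (Nat.gcd_dvd_right _ _)) huw
    exact htu (e1.symm.trans e2)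
  have hmlt : ∀ z : G, z ∈ N → 1 < csize z → Nat.Coprime m (csize z) → m < csize z := by
    intro z hzN h1 hcop
    refine lt_of_le_of_ne (hmin z hzN h1) (fun hEq => ?_)
    rw [hEq] at hcop
    have := Nat.Coprime.gcd_eq_one hcop
    rw [Nat.gcd_self] at this
    omega
  -- Step 3: coprimality of m with the product class size
  have step3 : ∀ (v : GammaStarV G N) (z : G), z ∈ N → v.1 ∣ csize z → cmk v ≠ K →
      Nat.Coprime m (csize z) → m < csize z → Nat.Coprime m (csize (a⁻¹ * z)) := by
    intro v z hzN hvd hvK hcop hlt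
    by_contra hc
    obtain ⟨s, hsp, hsd⟩ := Nat.exists_prime_and_dvd hc
    have hsm : s ∣ m := hsd.trans (Nat.gcd_dvd_left _ _)
    have hsE : s ∣ csize (a⁻¹ * z) := hsd.trans (Nat.gcd_dvd_right _ _)
    by_cases hcz : Nat.Coprime (csize (a⁻¹ * z)) (csize z)
    · have hdvd : csize (a⁻¹ * z) ∣ csize a⁻¹ * csize z :=
        csize_mul_dvd (by rw [csize_inv, hcsa]; exact hcop)
      rw [csize_inv, hcsa] at hdvd
      have hE_m : csize (a⁻¹ * z) ∣ m := Nat.Coprime.dvd_of_dvd_mul_right hcz hdvd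
      have hle : csize z ≤ csize (a⁻¹ * z) :=
        le_csize_mul (by rw [csize_inv, hcsa]; exact hcop)
      have hle2 := Nat.le_of_dvd (by omega) hE_m
      omega
    · obtain ⟨s', hs'p, hs'd⟩ := Nat.exists_prime_and_dvd hcz
      have h1 : s' ∣ csize (a⁻¹ * z) := hs'd.trans (Nat.gcd_dvd_left _ _)
      have h2 : s' ∣ csize z := hs'd.trans (Nat.gcd_dvd_right _ _)
      have hss' : s ≠ s' := by
        intro hEq
        have hd : s ∣ Nat.gcd m (csize z) := Nat.dvd_gcd hsm (hEq ▸ h2)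
        rw [Nat.Coprime.gcd_eq_one hcop] at hd
        exact hsp.ne_one (Nat.dvd_one.mp hd)
      let vS : GammaStarV G N := ⟨s, hsp, a, haN, show s ∣ csize a by rw [hcsa]; exact hsm⟩
      let vS' : GammaStarV G N := ⟨s', hs'p, z, hzN, h2⟩
      have hmem : a⁻¹ * z ∈ N := N.mul_mem (N.inv_mem haN) hzN
      have e0 : cmk vS = cmk vS' := by
        have hadj : (GammaStar G N).Adj vS vS' :=
          And.intro (fun hEq => hss' (congrArg Subtype.val hEq)) ⟨a⁻¹ * z, hmem,
            Nat.Coprime.mul_dvd_of_dvd_of_dvd ((Nat.coprime_primes hsp hs'p).mpr hss') hsE h1⟩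
        exact SimpleGraph.ConnectedComponent.sound hadj.reachable
      have e1 : cmk vS = K := primeofm vS hsm
      have e2 : cmk vS' = cmk v := adj_of vS' v z hzN h2 hvd
      exact hvK (by rw [← e2, ← e0, e1])
  -- the key subgroup
  set T : Set G := {g | ∃ u' v' : G, IsConj a u' ∧ IsConj a v' ∧ g = u' * v'⁻¹} with hT
  set Hc : Subgroup G := Subgroup.closure T with hHc
  have claim1 : ∀ z : G, Nat.Coprime m (csize z) → Nat.Coprime m (csize (a⁻¹ * z)) →
      ∀ u' v' d : G, IsConj a u' → IsConj a v' → IsConj z d → IsConj z (u' * v'⁻¹ * d) := by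
    intro z hc1 hc2 u' v' d hu hv hd
    have h1 : IsConj a⁻¹ v'⁻¹ := isConj_inv hv
    have h2 : IsConj (a⁻¹ * z) (v'⁻¹ * d) :=
      isConj_mul_of_coprime (by rw [csize_inv, hcsa]; exact hc1) h1 hd
    have h3 : IsConj (a * (a⁻¹ * z)) (u' * (v'⁻¹ * d)) :=
      isConj_mul_of_coprime (by rw [hcsa]; exact hc2) hu h2
    rw [mul_inv_cancel_left] at h3
    rw [mul_assoc]
    exact h3
  have claim2 : ∀ z : G, Nat.Coprime m (csize z) → Nat.Coprime m (csize (a⁻¹ * z)) →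
      ∀ h', h' ∈ Hc → ∀ d, IsConj z d → IsConj z (h' * d) := by
    intro z hc1 hc2 h' hh'
    have main : ∀ d, IsConj z d → IsConj z (h' * d) ∧ IsConj z (h'⁻¹ * d) := by
      induction hh' using Subgroup.closure_induction with
      | mem g hg =>
        obtain ⟨u', v', hu, hv, rfl⟩ := hg
        intro d hd
        refine ⟨claim1 z hc1 hc2 u' v' d hu hv hd, ?_⟩
        rw [mul_inv_rev, inv_inv]
        exact claim1 z hc1 hc2 v' u' d hv hu hd
      | one => intro d hd; constructor <;> simpa using hd
      | mul g1 g2 hg1 hg2 ih1 ih2 =>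
        intro d hd
        constructor
        · rw [mul_assoc]; exact (ih1 _ (ih2 d hd).1).1
        · rw [mul_inv_rev, mul_assoc]; exact (ih2 _ (ih1 d hd).2).2
      | inv g hg ih =>
        intro d hd
        refine ⟨(ih d hd).2, ?_⟩
        rw [inv_inv]
        exact (ih d hd).1
    exact fun d hd => (main d hd).1
  have hinvdvd : ∀ z : G, Nat.Coprime m (csize z) → Nat.Coprime m (csize (a⁻¹ * z)) →
      Nat.card Hc ∣ csize z := by
    intro z hc1 hc2
    have hD : (ConjClasses.mk z).carrier = {d | IsConj z d} := Set.ext (fun d => mem_carrier)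
    have hdvd := card_dvd_of_invariant Hc {d | IsConj z d}
      (fun h' hh' d hd => claim2 z hc1 hc2 h' hh' d hd)
    have : csize z = ({d | IsConj z d} : Set G).ncard := by
      rw [csize, hD, Nat.card_coe_set_eq]
    rw [this]
    exact hdvd
  have hdy : Nat.card Hc ∣ csize y :=
    hinvdvd y hcopy (step3 t y hyN hty htK hcopy (hmlt y hyN hy1 hcopy))
  have hdw : Nat.card Hc ∣ csize w :=
    hinvdvd w hcopw (step3 u w hwN huw huK hcopw (hmlt w hwN hw1 hcopw))
  have hH1 : Nat.card Hc = 1 := by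
    have h := Nat.dvd_gcd hdy hdw
    rw [Nat.Coprime.gcd_eq_one hcopyw] at h
    exact Nat.dvd_one.mp h
  have hbot : Hc = ⊥ := Subgroup.card_eq_one.mp hH1
  have h2lt : 1 < Nat.card (ConjClasses.mk a).carrier := by
    show 1 < csize a
    rw [hcsa]; omega
  have hnt : Nontrivial ((ConjClasses.mk a).carrier) :=
    Finite.one_lt_card_iff_nontrivial.mp h2lt
  obtain ⟨⟨u1, hu1⟩, ⟨u2, hu2⟩, hne⟩ := hnt
  have hmemT : u1 * u2⁻¹ ∈ T := ⟨u1, u2, mem_carrier.mp hu1, mem_carrier.mp hu2, rfl⟩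
  have hmemHc : u1 * u2⁻¹ ∈ Hc := Subgroup.subset_closure hmemT
  rw [hbot, Subgroup.mem_bot] at hmemHc
  exact hne (Subtype.ext (by rwa [mul_inv_eq_one] at hmemHc))
end

section
/- Let G be a finite group and N a normal subgroup of G. The number of connected components of the graph Γ_G(N) equals the number of connected components of the dual graph Γ*_G(N). -/
open scoped Classical

section Aux
variable {G : Type*} [Group G] [Finite G] {N : Subgroup G}

/-- Choose a prime divisor of the size of a class. -/
noncomputable def fV (C : NCClass G N) : GammaStarV G N :=
  ⟨(Nat.card C.1.carrier).minFac,
   Nat.minFac_prime C.2.2.ne',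
   by obtain ⟨x, hx, hC⟩ := C.2.1; exact ⟨x, hx, by rw [hC]; exact Nat.minFac_dvd _⟩⟩

lemma fV_dvd (C : NCClass G N) : (fV C).1 ∣ Nat.card C.1.carrier := Nat.minFac_dvd _

lemma card_pos_mk (x : G) : 0 < Nat.card (ConjClasses.mk x).carrier := by
  have : x ∈ (ConjClasses.mk x).carrier := ConjClasses.mem_carrier_iff_mk_eq.mpr rfl
  have : Nonempty (ConjClasses.mk x).carrier := ⟨⟨x, this⟩⟩
  exact Nat.card_pos

/-- Choose a class whose size is divisible by a given prime vertex. -/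
noncomputable def gV (p : GammaStarV G N) : NCClass G N :=
  ⟨ConjClasses.mk (Classical.choose p.2.2),
   ⟨_, (Classical.choose_spec p.2.2).1, rfl⟩,
    lt_of_lt_of_le p.2.1.one_lt
      (Nat.le_of_dvd (card_pos_mk _) (Classical.choose_spec p.2.2).2)⟩

lemma gV_dvd (p : GammaStarV G N) : p.1 ∣ Nat.card (gV p).1.carrier :=
  (Classical.choose_spec p.2.2).2

/-- Two primes dividing the size of a common class of `N` are in the same component. -/
lemma primes_same_comp (p q : GammaStarV G N) (C : NCClass G N)
    (hp : p.1 ∣ Nat.card C.1.carrier) (hq : q.1 ∣ Nat.card C.1.carrier) :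
    (GammaStar G N).connectedComponentMk p = (GammaStar G N).connectedComponentMk q := by
  by_cases h : p = q
  · rw [h]
  · apply SimpleGraph.ConnectedComponent.sound
    apply SimpleGraph.Adj.reachable
    refine ⟨h, ?_⟩
    obtain ⟨x, hx, hC⟩ := C.2.1
    have hne : p.1 ≠ q.1 := fun e => h (Subtype.ext e)
    have : p.1 * q.1 ∣ Nat.card C.1.carrier :=
      (Nat.Coprime.mul_dvd_of_dvd_of_dvd
        ((Nat.coprime_primes p.2.1 q.2.1).mpr hne) hp hq)
    exact ⟨x, hx, by rw [hC]; exact this⟩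

/-- Two classes whose sizes share a prime divisor are in the same component. -/
lemma classes_same_comp (B C : NCClass G N) (r : ℕ) (hr : r.Prime)
    (hB : r ∣ Nat.card B.1.carrier) (hC : r ∣ Nat.card C.1.carrier) :
    (GammaG G N).connectedComponentMk B = (GammaG G N).connectedComponentMk C := by
  by_cases h : B = C
  · rw [h]
  · apply SimpleGraph.ConnectedComponent.sound
    apply SimpleGraph.Adj.reachable
    refine ⟨h, fun hcop => ?_⟩
    have := Nat.dvd_one.mp (hcop ▸ Nat.dvd_gcd hB hC)
    exact hr.one_lt.ne' this

lemma comp_const {V : Type*} {Γ : SimpleGraph V} {β : Sort*} (f : V → β)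
    (h : ∀ v w, Γ.Adj v w → f v = f w) : ∀ v w, Γ.Walk v w → f v = f w := by
  intro v w p
  induction p with
  | nil => rfl
  | cons h' _ ih => exact (h _ _ h').trans ih

noncomputable def Fc : (GammaG G N).ConnectedComponent → (GammaStar G N).ConnectedComponent :=
  SimpleGraph.ConnectedComponent.lift
    (fun C => (GammaStar G N).connectedComponentMk (fV C))
    (fun B C w _ => comp_const _ (by
      intro B C hadj
      have hg : ¬ Nat.Coprime (Nat.card B.1.carrier) (Nat.card C.1.carrier) := hadj.2
      set n := Nat.gcd (Nat.card B.1.carrier) (Nat.card C.1.carrier) with hn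
      have hprime : n.minFac.Prime := Nat.minFac_prime hg
      have hdB : n.minFac ∣ Nat.card B.1.carrier :=
        (Nat.minFac_dvd n).trans (Nat.gcd_dvd_left _ _)
      have hdC : n.minFac ∣ Nat.card C.1.carrier :=
        (Nat.minFac_dvd n).trans (Nat.gcd_dvd_right _ _)
      obtain ⟨x, hx, hCeq⟩ := B.2.1
      exact (primes_same_comp (fV B) ⟨n.minFac, hprime, x, hx, by rw [hCeq]; exact hdB⟩
          B (fV_dvd B) hdB).trans
        (primes_same_comp ⟨n.minFac, hprime, x, hx, by rw [hCeq]; exact hdB⟩ (fV C)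
          C hdC (fV_dvd C))) B C w)

noncomputable def Gc : (GammaStar G N).ConnectedComponent → (GammaG G N).ConnectedComponent :=
  SimpleGraph.ConnectedComponent.lift
    (fun p => (GammaG G N).connectedComponentMk (gV p))
    (fun p q w _ => comp_const _ (by
      intro p q hadj
      obtain ⟨x, hx, hd⟩ := hadj.2
      have hcard : 1 < Nat.card (ConjClasses.mk x).carrier :=
        lt_of_lt_of_le (one_lt_mul_of_lt_of_le p.2.1.one_lt q.2.1.one_le)
          (Nat.le_of_dvd (card_pos_mk x) hd)
      exact (classes_same_comp (gV p) ⟨ConjClasses.mk x, ⟨x, hx, rfl⟩, hcard⟩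
          p.1 p.2.1 (gV_dvd p) ((dvd_mul_right _ _).trans hd)).trans
        (classes_same_comp ⟨ConjClasses.mk x, ⟨x, hx, rfl⟩, hcard⟩ (gV q)
          q.1 q.2.1 ((dvd_mul_left _ _).trans hd) (gV_dvd q))) p q w)

end Aux

theorem stmt6 {G : Type*} [Group G] [Finite G] (N : Subgroup G) (hN : N.Normal) :
    Nat.card (GammaG G N).ConnectedComponent = Nat.card (GammaStar G N).ConnectedComponent := by
  refine Nat.card_congr ⟨Fc, Gc, ?_, ?_⟩
  · intro c
    induction c using SimpleGraph.ConnectedComponent.ind with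
    | _ C =>
      show (GammaG G N).connectedComponentMk (gV (fV C)) = _
      exact classes_same_comp (gV (fV C)) C (fV C).1 (fV C).2.1 (gV_dvd (fV C)) (fV_dvd C)
  · intro c
    induction c using SimpleGraph.ConnectedComponent.ind with
    | _ p =>
      show (GammaStar G N).connectedComponentMk (fV (gV p)) = _
      exact primes_same_comp (fV (gV p)) p (gV p) (fV_dvd (gV p)) (gV_dvd p)
end

section
/- Let G be a finite group, N ⊴ G with Γ_G(N) disconnected with components X₁ and X₂, where X₂ contains the classes of maximal size. Let S = ⟨C : C ∈ X₁⟩ be the subgroup generated by all classes in X₁. Then S is a normal subgroup of G and every element of S is either central in G or its G-conjugacy class lies in X₁. -/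
open scoped Classical

namespace Stmt13Aux

open Subgroup

variable {G : Type*} [Group G]

lemma mem_carrier_iff {a x : G} :
    a ∈ (ConjClasses.mk x).carrier ↔ ∃ g : G, g * x * g⁻¹ = a := by
  rw [ConjClasses.mem_carrier_iff_mk_eq, ConjClasses.mk_eq_mk_iff_isConj, isConj_comm,
    isConj_iff]

lemma self_mem_carrier (x : G) : x ∈ (ConjClasses.mk x).carrier :=
  mem_carrier_iff.2 ⟨1, by group⟩

lemma conj_image_carrier (x g : G) :
    (fun w => g * w * g⁻¹) '' (ConjClasses.mk x).carrier = (ConjClasses.mk x).carrier := by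
  ext w
  constructor
  · rintro ⟨v, hv, rfl⟩
    obtain ⟨h, rfl⟩ := mem_carrier_iff.1 hv
    exact mem_carrier_iff.2 ⟨g * h, by group⟩
  · intro hw
    obtain ⟨h, rfl⟩ := mem_carrier_iff.1 hw
    exact ⟨g⁻¹ * (h * x * h⁻¹) * g, mem_carrier_iff.2 ⟨g⁻¹ * h, by group⟩, by group⟩

lemma carrier_inv (x : G) :
    (ConjClasses.mk x⁻¹).carrier = (fun w => w⁻¹) '' (ConjClasses.mk x).carrier := by
  ext w
  constructor
  · intro hw
    obtain ⟨g, rfl⟩ := mem_carrier_iff.1 hw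
    exact ⟨g * x * g⁻¹, mem_carrier_iff.2 ⟨g, rfl⟩, by group⟩
  · rintro ⟨v, hv, rfl⟩
    obtain ⟨g, rfl⟩ := mem_carrier_iff.1 hv
    exact mem_carrier_iff.2 ⟨g, by group⟩

lemma ncard_carrier_eq_index (x : G) :
    (ConjClasses.mk x).carrier.ncard = (Subgroup.centralizer {x}).index := by
  rw [← ConjAct.orbit_eq_carrier_conjClasses, ← MulAction.index_stabilizer,
    Subgroup.centralizer_eq_comap_stabilizer]
  exact (Subgroup.index_comap_of_surjective (f := ConjAct.toConjAct.toMonoidHom)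
    _ ConjAct.toConjAct.surjective).symm

lemma card_carrier_eq_index (x : G) :
    Nat.card (ConjClasses.mk x).carrier = (Subgroup.centralizer {x}).index := by
  rw [Nat.card_coe_set_eq, ncard_carrier_eq_index]

lemma centralizer_inv (x : G) :
    Subgroup.centralizer {x⁻¹} = Subgroup.centralizer {x} := by
  ext u
  simp only [Subgroup.mem_centralizer_singleton_iff]
  constructor
  · intro h
    have := congrArg (fun w => x * w * x) h
    simp only [mul_assoc] at this ⊢
    simpa [mul_assoc] using this.symm
  · intro h
    have := congrArg (fun w => x⁻¹ * w * x⁻¹) h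
    simpa [mul_assoc] using this.symm

lemma card_carrier_eq_one_of_center {x : G} (hx : x ∈ Subgroup.center G) :
    Nat.card (ConjClasses.mk x).carrier = 1 := by
  rw [card_carrier_eq_index]
  have : Subgroup.centralizer {x} = ⊤ := by
    rw [eq_top_iff']
    intro u
    exact Subgroup.mem_centralizer_singleton_iff.2 ((Subgroup.mem_center_iff.1 hx u).symm ▸
      (Subgroup.mem_center_iff.1 hx u))
  rw [this, Subgroup.index_top]

lemma one_lt_card_carrier [Finite G] {x : G} (hx : x ∉ Subgroup.center G) :
    1 < Nat.card (ConjClasses.mk x).carrier := by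
  obtain ⟨g, hg⟩ : ∃ g, ¬ (g * x = x * g) := by
    by_contra h; push_neg at h; exact hx (Subgroup.mem_center_iff.2 h)
  rw [Nat.card_coe_set_eq]
  rw [Set.one_lt_ncard_iff (Set.toFinite _)]
  refine ⟨g * x * g⁻¹, x, mem_carrier_iff.2 ⟨g, rfl⟩, self_mem_carrier x, ?_⟩
  intro heq
  apply hg
  calc g * x = (g * x * g⁻¹) * g := by group
  _ = x * g := by rw [heq]

section Index

variable [Finite G]

lemma index_inf_eq_mul {A B : Subgroup G} (h : Nat.Coprime A.index B.index) :
    (A ⊓ B).index = A.index * B.index := by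
  have h1 : A.index ∣ (A ⊓ B).index := Subgroup.index_dvd_of_le inf_le_left
  have h2 : B.index ∣ (A ⊓ B).index := Subgroup.index_dvd_of_le inf_le_right
  have h3 : A.index * B.index ∣ (A ⊓ B).index := h.mul_dvd_of_dvd_of_dvd h1 h2
  have h4 : (A ⊓ B).index ≠ 0 := Subgroup.index_ne_zero_of_finite
  exact le_antisymm (Subgroup.index_inf_le (H := A) (K := B))
    (Nat.le_of_dvd (Nat.pos_of_ne_zero h4) h3)

lemma exists_mul_of_coprime_index {A B : Subgroup G} (h : Nat.Coprime A.index B.index)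
    (g : G) : ∃ a ∈ A, ∃ b ∈ B, g = a * b := by
  classical
  have hrel : B.relIndex A = B.index := by
    have h1 := Subgroup.relIndex_mul_index (inf_le_left : A ⊓ B ≤ A)
    rw [Subgroup.inf_relIndex_left, index_inf_eq_mul h] at h1
    have hA : A.index ≠ 0 := Subgroup.index_ne_zero_of_finite
    have h2 : B.relIndex A * A.index = B.index * A.index := by rw [h1]; ring
    exact Nat.eq_of_mul_eq_mul_right (Nat.pos_of_ne_zero hA) h2
  let j : A ⧸ (B.subgroupOf A) → G ⧸ B :=
    Quotient.map' Subtype.val (by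
      intro a b hab
      rw [QuotientGroup.leftRel_apply] at hab ⊢
      simpa [Subgroup.mem_subgroupOf] using hab)
  have hinj : Function.Injective j := by
    intro q1 q2
    induction q1 using Quotient.inductionOn'
    induction q2 using Quotient.inductionOn'
    intro hq
    have h3 : _ = _ := hq
    simp only [j, Quotient.map'_mk''] at h3
    rw [QuotientGroup.eq] at h3
    apply Quotient.sound'
    rw [QuotientGroup.leftRel_apply]
    simpa [Subgroup.mem_subgroupOf] using h3
  have hcard : Nat.card (A ⧸ (B.subgroupOf A)) = Nat.card (G ⧸ B) := by
    rw [← Subgroup.index_eq_card, ← Subgroup.index_eq_card]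
    exact hrel
  have hsurj : Function.Surjective j :=
    ((Nat.bijective_iff_injective_and_card j).2 ⟨hinj, hcard⟩).2
  obtain ⟨q, hq⟩ := hsurj (QuotientGroup.mk g)
  induction q using Quotient.inductionOn' with
  | h a =>
    have h4 : (QuotientGroup.mk (a : G) : G ⧸ B) = QuotientGroup.mk g := hq
    rw [QuotientGroup.eq] at h4
    exact ⟨a, a.2, (a : G)⁻¹ * g, h4, by group⟩

/-- left-translation: `x * C_y ⊆ C_{xy}` for coprime class sizes. -/
lemma mul_carrier_subset {x y : G}
    (h : Nat.Coprime (Subgroup.centralizer {x}).index (Subgroup.centralizer {y}).index) :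
    (fun w => x * w) '' (ConjClasses.mk y).carrier ⊆ (ConjClasses.mk (x * y)).carrier := by
  rintro _ ⟨w, hw, rfl⟩
  obtain ⟨g, rfl⟩ := mem_carrier_iff.1 hw
  obtain ⟨u, hu, v, hv, rfl⟩ := exists_mul_of_coprime_index h g
  rw [Subgroup.mem_centralizer_singleton_iff] at hu hv
  refine mem_carrier_iff.2 ⟨u, ?_⟩
  have h1 : v * y * v⁻¹ = y := by rw [hv]; group
  have h2 : (u * v) * y * (u * v)⁻¹ = u * y * u⁻¹ := by
    rw [mul_inv_rev]
    calc u * v * y * (v⁻¹ * u⁻¹) = u * (v * y * v⁻¹) * u⁻¹ := by group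
    _ = u * y * u⁻¹ := by rw [h1]
  rw [h2]
  calc u * (x * y) * u⁻¹ = (u * x) * y * u⁻¹ := by group
  _ = (x * u) * y * u⁻¹ := by rw [hu]
  _ = x * (u * y * u⁻¹) := by group

/-- right-translation: `C_x * y ⊆ C_{xy}` for coprime class sizes. -/
lemma carrier_mul_subset {x y : G}
    (h : Nat.Coprime (Subgroup.centralizer {x}).index (Subgroup.centralizer {y}).index) :
    (fun w => w * y) '' (ConjClasses.mk x).carrier ⊆ (ConjClasses.mk (x * y)).carrier := by
  rintro _ ⟨w, hw, rfl⟩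
  obtain ⟨g, rfl⟩ := mem_carrier_iff.1 hw
  obtain ⟨v, hv, u, hu, rfl⟩ := exists_mul_of_coprime_index h.symm g
  rw [Subgroup.mem_centralizer_singleton_iff] at hu hv
  refine mem_carrier_iff.2 ⟨v, ?_⟩
  have h1 : u * x * u⁻¹ = x := by rw [hu]; group
  have h2 : (v * u) * x * (v * u)⁻¹ = v * x * v⁻¹ := by
    rw [mul_inv_rev]
    calc v * u * x * (u⁻¹ * v⁻¹) = v * (u * x * u⁻¹) * v⁻¹ := by group
    _ = v * x * v⁻¹ := by rw [h1]
  rw [h2]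
  have h3 : v * y * v⁻¹ = y := by rw [hv]; group
  calc v * (x * y) * v⁻¹ = (v * x * v⁻¹) * (v * y * v⁻¹) := by group
  _ = v * x * v⁻¹ * y := by rw [h3]

end Index

/-- The subgroup of elements `h` with `S·h = S`. -/
def rightStab (S : Set G) : Subgroup G where
  carrier := {h | (fun w => w * h) '' S = S}
  one_mem' := by simp
  mul_mem' := by
    intro a b ha hb
    simp only [Set.mem_setOf_eq] at *
    have hcomp : (fun w => w * (a * b)) = (fun w => w * b) ∘ (fun w => w * a) := by
      funext w; simp [mul_assoc]
    rw [hcomp, Set.image_comp, ha, hb]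
  inv_mem' := by
    intro a ha
    simp only [Set.mem_setOf_eq] at *
    conv_lhs => rw [← ha]
    rw [← Set.image_comp]
    have h : ((fun w => w * a⁻¹) ∘ fun w => w * a) = id := by funext w; simp
    rw [h, Set.image_id]

/-- The subgroup of elements `h` with `h·S = S`. -/
def leftStab (S : Set G) : Subgroup G where
  carrier := {h | (fun w => h * w) '' S = S}
  one_mem' := by simp
  mul_mem' := by
    intro a b ha hb
    simp only [Set.mem_setOf_eq] at *
    have hcomp : (fun w => (a * b) * w) = (fun w => a * w) ∘ (fun w => b * w) := by
      funext w; simp [mul_assoc]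
    rw [hcomp, Set.image_comp, hb, ha]
  inv_mem' := by
    intro a ha
    simp only [Set.mem_setOf_eq] at *
    conv_lhs => rw [← ha]
    rw [← Set.image_comp]
    have h : ((fun w => a⁻¹ * w) ∘ fun w => a * w) = id := by funext w; simp [mul_assoc]
    rw [h, Set.image_id]

section StabCard

variable [Finite G]

lemma card_rightStab_dvd (S : Set G) : Nat.card (rightStab S) ∣ S.ncard := by
  set H := rightStab S with hH
  have hpre : (QuotientGroup.mk ⁻¹' (QuotientGroup.mk '' S : Set (G ⧸ H)) : Set G) = S := by
    apply subset_antisymm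
    · rintro g hg
      obtain ⟨s, hs, heq⟩ := hg
      have hmem : s⁻¹ * g ∈ H := (QuotientGroup.eq).1 heq
      have himg : s * (s⁻¹ * g) ∈ (fun w => w * (s⁻¹ * g)) '' S := ⟨s, hs, rfl⟩
      rw [hmem] at himg
      simpa using himg
    · exact Set.subset_preimage_image _ _
  have hcard : Nat.card (QuotientGroup.mk ⁻¹' (QuotientGroup.mk '' S : Set (G ⧸ H)) : Set G)
      = Nat.card H * Nat.card (QuotientGroup.mk '' S : Set (G ⧸ H)) := by
    rw [Nat.card_congr (QuotientGroup.preimageMkEquivSubgroupProdSet H _), Nat.card_prod]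
  rw [hpre] at hcard
  rw [← Nat.card_coe_set_eq, hcard]
  exact dvd_mul_right _ _

lemma card_leftStab_dvd (S : Set G) : Nat.card (leftStab S) ∣ S.ncard := by
  have hle : leftStab S ≤ rightStab ((fun w => w⁻¹) '' S) := by
    intro h hh
    have hinv : h⁻¹ ∈ leftStab S := (leftStab S).inv_mem hh
    have hinv' : (fun w => h⁻¹ * w) '' S = S := hinv
    show (fun w => w * h) '' ((fun w => w⁻¹) '' S) = (fun w => w⁻¹) '' S
    conv_rhs => rw [← hinv']
    rw [Set.image_image, Set.image_image]
    exact congrArg (fun f : G → G => f '' S) (funext fun w => by group)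
  have h1 : Nat.card (leftStab S) ∣ Nat.card (rightStab ((fun w => w⁻¹) '' S)) :=
    Subgroup.card_dvd_of_le hle
  have h2 := card_rightStab_dvd ((fun w => w⁻¹) '' S)
  rw [Set.ncard_image_of_injective S inv_injective] at h2
  exact h1.trans h2

end StabCard

section Graph

variable {G : Type*} [Group G] [Finite G] {N : Subgroup G}

lemma cross_coprime (U V : NCClass G N)
    (h : (GammaG G N).connectedComponentMk U ≠ (GammaG G N).connectedComponentMk V) :
    Nat.Coprime (Nat.card U.1.carrier) (Nat.card V.1.carrier) := by
  by_contra hnc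
  have hUV : U ≠ V := by rintro rfl; exact h rfl
  exact h (SimpleGraph.ConnectedComponent.sound
    (SimpleGraph.Adj.reachable (show (GammaG G N).Adj U V from (⟨hUV, hnc⟩ : U ≠ V ∧ _))))

lemma comp_eq_of_not_coprime (U V : NCClass G N)
    (h : ¬ Nat.Coprime (Nat.card U.1.carrier) (Nat.card V.1.carrier)) :
    (GammaG G N).connectedComponentMk U = (GammaG G N).connectedComponentMk V := by
  by_cases hUV : U = V
  · rw [hUV]
  · exact SimpleGraph.ConnectedComponent.sound
      (SimpleGraph.Adj.reachable (show (GammaG G N).Adj U V from (⟨hUV, h⟩ : U ≠ V ∧ _)))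

/-- The key lemma: if x, y are elements of N whose classes lie outside the component of B₀,
but the class of x*y lies in the component of B₀, then x*y is central. -/
lemma key (hN : N.Normal) (B₀ : NCClass G N)
    (hmax : ∀ z ∈ N, Nat.card (ConjClasses.mk z).carrier ≤ Nat.card B₀.1.carrier)
    {x y : G} (hxN : x ∈ N) (hyN : y ∈ N)
    (Bx By Be : NCClass G N)
    (hBx : ConjClasses.mk x = Bx.1) (hBy : ConjClasses.mk y = By.1)
    (hBe : ConjClasses.mk (x * y) = Be.1)
    (hcx : (GammaG G N).connectedComponentMk Bx ≠ (GammaG G N).connectedComponentMk B₀)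
    (hcy : (GammaG G N).connectedComponentMk By ≠ (GammaG G N).connectedComponentMk B₀)
    (hce : (GammaG G N).connectedComponentMk Be = (GammaG G N).connectedComponentMk B₀) :
    x * y ∈ Subgroup.center G := by
  obtain ⟨b₀, hb₀N, hb₀⟩ := B₀.2.1
  set cx := Subgroup.centralizer {x} with hcxdef
  set cy := Subgroup.centralizer {y} with hcydef
  set ce := Subgroup.centralizer {x * y} with hcedef
  set cb := Subgroup.centralizer {b₀} with hcbdef
  have hcardx : Nat.card Bx.1.carrier = cx.index := by rw [← hBx, card_carrier_eq_index]
  have hcardy : Nat.card By.1.carrier = cy.index := by rw [← hBy, card_carrier_eq_index]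
  have hcarde : Nat.card Be.1.carrier = ce.index := by rw [← hBe, card_carrier_eq_index]
  have hcardb : Nat.card B₀.1.carrier = cb.index := by rw [← hb₀, card_carrier_eq_index]
  have cxe : (GammaG G N).connectedComponentMk Bx ≠ (GammaG G N).connectedComponentMk Be :=
    fun h => hcx (h.trans hce)
  have cye : (GammaG G N).connectedComponentMk By ≠ (GammaG G N).connectedComponentMk Be :=
    fun h => hcy (h.trans hce)
  have co_nm : Nat.Coprime cx.index ce.index := by
    have h := cross_coprime Bx Be cxe; rwa [hcardx, hcarde] at h
  have co_n'm : Nat.Coprime cy.index ce.index := by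
    have h := cross_coprime By Be cye; rwa [hcardy, hcarde] at h
  have co_nb : Nat.Coprime cx.index cb.index := by
    have h := cross_coprime Bx B₀ hcx; rwa [hcardx, hcardb] at h
  have co_n'b : Nat.Coprime cy.index cb.index := by
    have h := cross_coprime By B₀ hcy; rwa [hcardy, hcardb] at h
  -- |class y| = |class x|
  have hle1 : cx ⊓ ce ≤ cy := by
    intro u hu
    obtain ⟨hu1, hu2⟩ := Subgroup.mem_inf.1 hu
    rw [hcxdef, Subgroup.mem_centralizer_singleton_iff] at hu1
    rw [hcedef, Subgroup.mem_centralizer_singleton_iff] at hu2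
    have c1 : Commute u x := hu1
    have c2 : Commute u (x * y) := hu2
    have c3 : Commute u y := by
      have := c1.inv_right.mul_right c2
      rwa [inv_mul_cancel_left] at this
    exact Subgroup.mem_centralizer_singleton_iff.2 c3
  have hle2 : cy ⊓ ce ≤ cx := by
    intro u hu
    obtain ⟨hu1, hu2⟩ := Subgroup.mem_inf.1 hu
    rw [hcydef, Subgroup.mem_centralizer_singleton_iff] at hu1
    rw [hcedef, Subgroup.mem_centralizer_singleton_iff] at hu2
    have c1 : Commute u y := hu1
    have c2 : Commute u (x * y) := hu2
    have c3 : Commute u x := by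
      have := c2.mul_right c1.inv_right
      rwa [mul_inv_cancel_right] at this
    exact Subgroup.mem_centralizer_singleton_iff.2 c3
  have d1 : cy.index ∣ cx.index * ce.index := by
    rw [← index_inf_eq_mul co_nm]; exact Subgroup.index_dvd_of_le hle1
  have d1' : cy.index ∣ cx.index := (Nat.Coprime.dvd_of_dvd_mul_right co_n'm d1)
  have d2 : cx.index ∣ cy.index * ce.index := by
    rw [← index_inf_eq_mul co_n'm]; exact Subgroup.index_dvd_of_le hle2
  have d2' : cx.index ∣ cy.index := (Nat.Coprime.dvd_of_dvd_mul_right co_nm d2)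
  have hnn' : cx.index = cy.index := Nat.dvd_antisymm d2' d1'
  -- the class of x⁻¹, right-translated by (x*y), equals the class of y
  set Kinv := (ConjClasses.mk x⁻¹).carrier with hKinvdef
  have hKinvcard : Kinv.ncard = cx.index := by
    rw [hKinvdef, ncard_carrier_eq_index, centralizer_inv]
  have co_inv_e : Nat.Coprime (Subgroup.centralizer {x⁻¹}).index ce.index := by
    rw [centralizer_inv]; exact co_nm
  have claim1 : (fun w => w * (x * y)) '' Kinv ⊆ (ConjClasses.mk y).carrier := by
    have h0 := carrier_mul_subset co_inv_e
    rwa [show x⁻¹ * (x * y) = y by group] at h0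
  have hycard : (ConjClasses.mk y).carrier.ncard = cx.index := by
    rw [ncard_carrier_eq_index, hnn']
  have eq1 : (fun w => w * (x * y)) '' Kinv = (ConjClasses.mk y).carrier := by
    apply Set.eq_of_subset_of_ncard_le claim1 ?_ (Set.toFinite _)
    rw [hycard, Set.ncard_image_of_injective _ (mul_left_injective (x * y)), hKinvcard]
  have eqg : ∀ g : G, (fun w => w * (g * (x * y) * g⁻¹)) '' Kinv
      = (ConjClasses.mk y).carrier := by
    intro g
    have h1 : Kinv = (fun w => g * w * g⁻¹) '' Kinv := (conj_image_carrier x⁻¹ g).symm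
    conv_lhs => rw [h1]
    rw [Set.image_image]
    have h2 : (fun w => (g * w * g⁻¹) * (g * (x * y) * g⁻¹))
        = fun w => g * (w * (x * y)) * g⁻¹ := by funext w; group
    rw [h2, ← Set.image_image (fun w => g * w * g⁻¹) (fun w => w * (x * y)), eq1,
      conj_image_carrier]
  have hH1 : ∀ g : G, (g * (x * y) * g⁻¹) * (x * y)⁻¹ ∈ rightStab Kinv := by
    intro g
    show (fun w => w * ((g * (x * y) * g⁻¹) * (x * y)⁻¹)) '' Kinv = Kinv
    have hsplit : (fun w => w * ((g * (x * y) * g⁻¹) * (x * y)⁻¹))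
        = (fun w => w * (x * y)⁻¹) ∘ (fun w => w * (g * (x * y) * g⁻¹)) := by
      funext w; simp [mul_assoc]
    rw [hsplit, Set.image_comp, eqg g, ← eq1, ← Set.image_comp]
    have h : ((fun w => w * (x * y)⁻¹) ∘ (fun w => w * (x * y))) = id := by
      funext w; simp only [Function.comp_apply, id_eq]; group
    rw [h, Set.image_id]
  -- T-side: the class of x*y*b₀ is (x*y) · class(b₀)
  set T := (ConjClasses.mk b₀).carrier with hTdef
  have hTcard : T.ncard = cb.index := ncard_carrier_eq_index b₀
  have hmax' : ∀ z ∈ N, (ConjClasses.mk z).carrier.ncard ≤ cb.index := by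
    intro z hz
    have h := hmax z hz
    rwa [Nat.card_coe_set_eq, hcardb] at h
  have claim3 := mul_carrier_subset (x := y) (y := b₀) co_n'b
  have eq3 : (fun w => y * w) '' T = (ConjClasses.mk (y * b₀)).carrier := by
    apply Set.eq_of_subset_of_ncard_le claim3 ?_ (Set.toFinite _)
    rw [Set.ncard_image_of_injective _ (mul_right_injective y), hTcard]
    exact hmax' _ (mul_mem hyN hb₀N)
  have hybcard : (ConjClasses.mk (y * b₀)).carrier.ncard = cb.index := by
    rw [← eq3, Set.ncard_image_of_injective _ (mul_right_injective y), hTcard]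
  have co_x_yb : Nat.Coprime cx.index (Subgroup.centralizer {y * b₀}).index := by
    rw [← ncard_carrier_eq_index (y * b₀), hybcard]; exact co_nb
  have claim4 := mul_carrier_subset (x := x) (y := y * b₀) co_x_yb
  have eq4' : (fun w => x * w) '' (ConjClasses.mk (y * b₀)).carrier
      = (ConjClasses.mk (x * (y * b₀))).carrier := by
    apply Set.eq_of_subset_of_ncard_le claim4 ?_ (Set.toFinite _)
    rw [Set.ncard_image_of_injective _ (mul_right_injective x), hybcard]
    exact hmax' _ (mul_mem hxN (mul_mem hyN hb₀N))
  have eq4 : (fun w => (x * y) * w) '' T = (ConjClasses.mk (x * (y * b₀))).carrier := by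
    rw [← eq4', ← eq3, Set.image_image]
    exact congrArg (fun f : G → G => f '' T) (funext fun w => by group)
  have hH2 : ∀ g : G, (x * y)⁻¹ * (g * (x * y) * g⁻¹) ∈ leftStab T := by
    intro g
    have hinvar : (fun w => g * w * g⁻¹) '' (ConjClasses.mk (x * (y * b₀))).carrier
        = (ConjClasses.mk (x * (y * b₀))).carrier := conj_image_carrier _ g
    rw [← eq4, Set.image_image] at hinvar
    have hsplit : (fun w => g * ((x * y) * w) * g⁻¹)
        = (fun w => (g * (x * y) * g⁻¹) * w) ∘ (fun w => g * w * g⁻¹) := by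
      funext w; simp only [Function.comp_apply]; group
    rw [hsplit, Set.image_comp] at hinvar
    rw [show ((fun w => g * w * g⁻¹) '' T) = T from conj_image_carrier b₀ g] at hinvar
    show (fun w => ((x * y)⁻¹ * (g * (x * y) * g⁻¹)) * w) '' T = T
    have hsplit2 : (fun w => ((x * y)⁻¹ * (g * (x * y) * g⁻¹)) * w)
        = (fun w => (x * y)⁻¹ * w) ∘ (fun w => (g * (x * y) * g⁻¹) * w) := by
      funext w; simp [mul_assoc]
    rw [hsplit2, Set.image_comp, hinvar, ← Set.image_comp]
    have h : ((fun w => (x * y)⁻¹ * w) ∘ (fun w => (x * y) * w)) = id := by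
      funext w; simp only [Function.comp_apply, id_eq]; group
    rw [h, Set.image_id]
  -- combine
  have dH1 : Nat.card (rightStab Kinv) ∣ cx.index := hKinvcard ▸ card_rightStab_dvd Kinv
  have dH2 : Nat.card (leftStab T) ∣ cb.index := hTcard ▸ card_leftStab_dvd T
  set H2' := (leftStab T).map (MulAut.conj (x * y)).toMonoidHom with hH2'def
  have hcardH2' : Nat.card H2' = Nat.card (leftStab T) :=
    (Nat.card_congr (Subgroup.equivMapOfInjective (leftStab T) _
      (MulAut.conj (x * y)).injective).toEquiv).symm
  have hbot : rightStab Kinv ⊓ H2' = ⊥ := by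
    rw [← Subgroup.card_eq_one]
    have hd : Nat.card (rightStab Kinv ⊓ H2' : Subgroup G) ∣ Nat.gcd cx.index cb.index :=
      Nat.dvd_gcd ((Subgroup.card_dvd_of_le inf_le_left).trans dH1)
        ((Subgroup.card_dvd_of_le inf_le_right).trans (hcardH2' ▸ dH2))
    rw [Nat.Coprime] at co_nb
    rw [co_nb] at hd
    exact Nat.dvd_one.1 hd
  have hcentral : ∀ g : G, g * (x * y) * g⁻¹ = x * y := by
    intro g
    have hm2 : (g * (x * y) * g⁻¹) * (x * y)⁻¹ ∈ H2' := by
      refine Subgroup.mem_map.2 ⟨(x * y)⁻¹ * (g * (x * y) * g⁻¹), hH2 g, ?_⟩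
      show MulAut.conj (x * y) _ = _
      rw [MulAut.conj_apply]; group
    have hmem : (g * (x * y) * g⁻¹) * (x * y)⁻¹ ∈ rightStab Kinv ⊓ H2' := ⟨hH1 g, hm2⟩
    rw [hbot, Subgroup.mem_bot] at hmem
    exact mul_inv_eq_one.1 hmem
  refine Subgroup.mem_center_iff.2 fun g => ?_
  have h := hcentral g
  calc g * (x * y) = (g * (x * y) * g⁻¹) * g := by group
  _ = (x * y) * g := by rw [h]

lemma carrier_central_mul {s t : G} (hs : s ∈ Subgroup.center G) :
    (ConjClasses.mk (s * t)).carrier = (fun w => s * w) '' (ConjClasses.mk t).carrier := by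
  ext w
  simp only [mem_carrier_iff, Set.mem_image]
  constructor
  · rintro ⟨g, rfl⟩
    refine ⟨g * t * g⁻¹, ⟨g, rfl⟩, ?_⟩
    have hgs : g * s = s * g := Subgroup.mem_center_iff.1 hs g
    calc s * (g * t * g⁻¹) = (s * g) * t * g⁻¹ := by group
    _ = (g * s) * t * g⁻¹ := by rw [hgs]
    _ = g * (s * t) * g⁻¹ := by group
  · rintro ⟨v, ⟨g, rfl⟩, rfl⟩
    refine ⟨g, ?_⟩
    have hgs : g * s = s * g := Subgroup.mem_center_iff.1 hs g
    calc g * (s * t) * g⁻¹ = (g * s) * t * g⁻¹ := by group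
    _ = (s * g) * t * g⁻¹ := by rw [hgs]
    _ = s * (g * t * g⁻¹) := by group

lemma carrier_mul_central {s t : G} (ht : t ∈ Subgroup.center G) :
    (ConjClasses.mk (s * t)).carrier = (fun w => w * t) '' (ConjClasses.mk s).carrier := by
  ext w
  simp only [mem_carrier_iff, Set.mem_image]
  constructor
  · rintro ⟨g, rfl⟩
    refine ⟨g * s * g⁻¹, ⟨g, rfl⟩, ?_⟩
    have hgt : g⁻¹ * t = t * g⁻¹ := Subgroup.mem_center_iff.1 ht g⁻¹
    calc (g * s * g⁻¹) * t = g * s * (g⁻¹ * t) := by group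
    _ = g * s * (t * g⁻¹) := by rw [hgt]
    _ = g * (s * t) * g⁻¹ := by group
  · rintro ⟨v, ⟨g, rfl⟩, rfl⟩
    refine ⟨g, ?_⟩
    have hgt : g⁻¹ * t = t * g⁻¹ := Subgroup.mem_center_iff.1 ht g⁻¹
    calc g * (s * t) * g⁻¹ = g * s * (t * g⁻¹) := by group
    _ = g * s * (g⁻¹ * t) := by rw [hgt]
    _ = (g * s * g⁻¹) * t := by group

end Graph

end Stmt13Aux

open Stmt13Aux in
theorem stmt13 {G : Type*} [Group G] [Finite G] (N : Subgroup G) (hN : N.Normal)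
    (h2 : Nat.card (GammaG G N).ConnectedComponent = 2)
    (B₀ : NCClass G N)
    (hmax : ∀ x ∈ N, Nat.card (ConjClasses.mk x).carrier ≤ Nat.card B₀.1.carrier)
    (S : Subgroup G)
    (hS : S = Subgroup.closure {x : G | ∃ B : NCClass G N,
        (GammaG G N).connectedComponentMk B ≠ (GammaG G N).connectedComponentMk B₀ ∧
        x ∈ B.1.carrier}) :
    S.Normal ∧ ∀ s ∈ S, s ∈ Subgroup.center G ∨
      ∃ B : NCClass G N,
        (GammaG G N).connectedComponentMk B ≠ (GammaG G N).connectedComponentMk B₀ ∧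
        ConjClasses.mk s = B.1 := by
  subst hS
  set T₀ : Set G := {x : G | ∃ B : NCClass G N,
      (GammaG G N).connectedComponentMk B ≠ (GammaG G N).connectedComponentMk B₀ ∧
      x ∈ B.1.carrier} with hT₀
  constructor
  · -- normality
    constructor
    intro s hs g
    refine Subgroup.closure_induction
      (p := fun s _ => ∀ g : G, g * s * g⁻¹ ∈ Subgroup.closure T₀) ?_ ?_ ?_ ?_ hs g
    · intro z hz g
      apply Subgroup.subset_closure
      obtain ⟨B, hB, hzB⟩ := hz
      refine ⟨B, hB, ?_⟩
      have hmk : ConjClasses.mk z = B.1 := ConjClasses.mem_carrier_iff_mk_eq.1 hzB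
      rw [← hmk]
      exact mem_carrier_iff.2 ⟨g, rfl⟩
    · intro g; simpa using Subgroup.one_mem _
    · intro u v _ _ hu hv g
      have h : g * (u * v) * g⁻¹ = (g * u * g⁻¹) * (g * v * g⁻¹) := by group
      rw [h]; exact Subgroup.mul_mem _ (hu g) (hv g)
    · intro u _ hu g
      have h : g * u⁻¹ * g⁻¹ = (g * u * g⁻¹)⁻¹ := by group
      rw [h]; exact Subgroup.inv_mem _ (hu g)
  · -- membership description
    intro s hs
    suffices h : s ∈ N ∧ (s ∈ Subgroup.center G ∨
        ∃ B : NCClass G N,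
          (GammaG G N).connectedComponentMk B ≠ (GammaG G N).connectedComponentMk B₀ ∧
          ConjClasses.mk s = B.1) from h.2
    refine Subgroup.closure_induction
      (p := fun s _ => s ∈ N ∧ (s ∈ Subgroup.center G ∨
        ∃ B : NCClass G N,
          (GammaG G N).connectedComponentMk B ≠ (GammaG G N).connectedComponentMk B₀ ∧
          ConjClasses.mk s = B.1)) ?_ ?_ ?_ ?_ hs
    · -- generators
      intro z hz
      obtain ⟨B, hB, hzB⟩ := hz
      have hmk : ConjClasses.mk z = B.1 := ConjClasses.mem_carrier_iff_mk_eq.1 hzB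
      have hzN : z ∈ N := by
        obtain ⟨z₀, hz₀N, hz₀⟩ := B.2.1
        have : ConjClasses.mk z₀ = ConjClasses.mk z := by rw [hz₀, hmk]
        have hconj := ConjClasses.mk_eq_mk_iff_isConj.1 this
        obtain ⟨c, hc⟩ := isConj_iff.1 hconj
        rw [← hc]
        exact hN.conj_mem z₀ hz₀N c
      exact ⟨hzN, Or.inr ⟨B, hB, hmk⟩⟩
    · exact ⟨N.one_mem, Or.inl (Subgroup.center G).one_mem⟩
    · -- multiplication
      intro u v _ _ hu hv
      obtain ⟨huN, hud⟩ := hu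
      obtain ⟨hvN, hvd⟩ := hv
      refine ⟨N.mul_mem huN hvN, ?_⟩
      by_cases huv : u * v ∈ Subgroup.center G
      · exact Or.inl huv
      · -- u*v noncentral: produce its vertex
        have hcarduv : 1 < Nat.card (ConjClasses.mk (u * v)).carrier :=
          one_lt_card_carrier huv
        rcases hud with huc | ⟨Bu, hBu, hmku⟩
        · rcases hvd with hvc | ⟨Bv, hBv, hmkv⟩
          · exact absurd (Subgroup.mul_mem _ huc hvc) huv
          · -- u central, v in X₁
            set B' : NCClass G N := ⟨ConjClasses.mk (u * v),
              ⟨⟨u * v, N.mul_mem huN hvN, rfl⟩, hcarduv⟩⟩ with hB'def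
            refine Or.inr ⟨B', ?_, rfl⟩
            have hcards : Nat.card (ConjClasses.mk (u * v)).carrier
                = Nat.card Bv.1.carrier := by
              rw [← hmkv, carrier_central_mul huc, Nat.card_coe_set_eq,
                Nat.card_coe_set_eq,
                Set.ncard_image_of_injective _ (mul_right_injective u)]
            have hnc : ¬ Nat.Coprime (Nat.card B'.1.carrier) (Nat.card Bv.1.carrier) := by
              show ¬ Nat.Coprime (Nat.card (ConjClasses.mk (u*v)).carrier) _
              rw [hcards]
              intro hco
              rw [Nat.Coprime, Nat.gcd_self] at hco
              have := Bv.2.2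
              omega
            have hcomp := comp_eq_of_not_coprime B' Bv hnc
            rw [hcomp]
            exact hBv
        · rcases hvd with hvc | ⟨Bv, hBv, hmkv⟩
          · -- v central, u in X₁
            set B' : NCClass G N := ⟨ConjClasses.mk (u * v),
              ⟨⟨u * v, N.mul_mem huN hvN, rfl⟩, hcarduv⟩⟩ with hB'def
            refine Or.inr ⟨B', ?_, rfl⟩
            have hcards : Nat.card (ConjClasses.mk (u * v)).carrier
                = Nat.card Bu.1.carrier := by
              rw [← hmku, carrier_mul_central hvc, Nat.card_coe_set_eq,
                Nat.card_coe_set_eq,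
                Set.ncard_image_of_injective _ (mul_left_injective v)]
            have hnc : ¬ Nat.Coprime (Nat.card B'.1.carrier) (Nat.card Bu.1.carrier) := by
              show ¬ Nat.Coprime (Nat.card (ConjClasses.mk (u*v)).carrier) _
              rw [hcards]
              intro hco
              rw [Nat.Coprime, Nat.gcd_self] at hco
              have := Bu.2.2
              omega
            have hcomp := comp_eq_of_not_coprime B' Bu hnc
            rw [hcomp]
            exact hBu
          · -- both in X₁ : the key lemma
            set B' : NCClass G N := ⟨ConjClasses.mk (u * v),
              ⟨⟨u * v, N.mul_mem huN hvN, rfl⟩, hcarduv⟩⟩ with hB'def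
            refine Or.inr ⟨B', ?_, rfl⟩
            intro hcontra
            exact huv (key hN B₀ hmax huN hvN Bu Bv B' hmku hmkv rfl hBu hBv hcontra)
    · -- inverses
      intro u _ hu
      obtain ⟨huN, hud⟩ := hu
      refine ⟨N.inv_mem huN, ?_⟩
      rcases hud with huc | ⟨Bu, hBu, hmku⟩
      · exact Or.inl ((Subgroup.center G).inv_mem huc)
      · have hcardinv : Nat.card (ConjClasses.mk u⁻¹).carrier
            = Nat.card Bu.1.carrier := by
          rw [← hmku, carrier_inv, Nat.card_coe_set_eq, Nat.card_coe_set_eq,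
            Set.ncard_image_of_injective _ inv_injective]
        have hcard' : 1 < Nat.card (ConjClasses.mk u⁻¹).carrier := by
          rw [hcardinv]; exact Bu.2.2
        set B' : NCClass G N := ⟨ConjClasses.mk u⁻¹,
          ⟨⟨u⁻¹, N.inv_mem huN, rfl⟩, hcard'⟩⟩ with hB'def
        refine Or.inr ⟨B', ?_, rfl⟩
        have hnc : ¬ Nat.Coprime (Nat.card B'.1.carrier) (Nat.card Bu.1.carrier) := by
          show ¬ Nat.Coprime (Nat.card (ConjClasses.mk u⁻¹).carrier) _
          rw [hcardinv]
          intro hco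
          rw [Nat.Coprime, Nat.gcd_self] at hco
          have := Bu.2.2
          omega
        have hcomp := comp_eq_of_not_coprime B' Bu hnc
        rw [hcomp]
        exact hBu
end

section
/- Let G be a finite group, N ⊴ G with Γ_G(N) having two connected components X₁ and X₂ (with X₂ containing the maximal size class). Let S = ⟨C : C ∈ X₁⟩ and T = ⟨CC⁻¹ : C ∈ X₁⟩. Then T = [S, G], T is normal in G, T ≤ Z(S), and for every G-conjugacy class C of an element of N not contained in S, |T| divides |C|. -/
open scoped Classical
open Pointwise
open scoped commutatorElement

set_option linter.unusedSectionVars false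
set_option maxHeartbeats 1600000

namespace Stmt14Aux

variable {G : Type*} [Group G] [Finite G]

lemma mem_cc {g x : G} : x ∈ (ConjClasses.mk g).carrier ↔ IsConj g x := by
  rw [ConjClasses.mem_carrier_iff_mk_eq, ConjClasses.mk_eq_mk_iff_isConj, isConj_comm]

lemma self_mem_cc (g : G) : g ∈ (ConjClasses.mk g).carrier := mem_cc.mpr (IsConj.refl g)

lemma conj_mem_cc {g x : G} (hx : x ∈ (ConjClasses.mk g).carrier) (w : G) :
    w * x * w⁻¹ ∈ (ConjClasses.mk g).carrier := by
  rw [mem_cc] at hx ⊢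
  exact hx.trans (isConj_iff.mpr ⟨w, rfl⟩)

lemma coprime_self_one {n : ℕ} (h : Nat.Coprime n n) : n = 1 := by
  rw [Nat.Coprime, Nat.gcd_self] at h
  exact h

lemma conj_mem_carrier {C : ConjClasses G} {x : G} (hx : x ∈ C.carrier) (w : G) :
    w * x * w⁻¹ ∈ C.carrier := by
  have h := ConjClasses.mem_carrier_iff_mk_eq.mp hx
  subst h
  exact conj_mem_cc (self_mem_cc x) w

lemma card_cc (g : G) :
    Nat.card (ConjClasses.mk g).carrier = (Subgroup.centralizer {g}).index := by
  have h1 : Nat.card (ConjClasses.mk g).carrier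
      = Nat.card (MulAction.orbit (ConjAct G) g) := by
    rw [ConjAct.orbit_eq_carrier_conjClasses]
  rw [h1, Nat.card_congr (MulAction.orbitEquivQuotientStabilizer (ConjAct G) g),
    Subgroup.centralizer_eq_comap_stabilizer]
  exact (Subgroup.index_comap_of_surjective _ (MulEquiv.surjective _)).symm

lemma nn_pos (g : G) : 0 < Nat.card (ConjClasses.mk g).carrier :=
  Nat.card_pos_iff.mpr ⟨⟨g, self_mem_cc g⟩, Set.toFinite _⟩

lemma cc_inv (g : G) : (ConjClasses.mk g⁻¹).carrier = Inv.inv '' (ConjClasses.mk g).carrier := by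
  ext x
  simp only [Set.mem_image, mem_cc]
  constructor
  · intro h
    exact ⟨x⁻¹, by
      obtain ⟨w, hw⟩ := isConj_iff.mp h
      exact ⟨isConj_iff.mpr ⟨w, by rw [← hw]; group⟩, inv_inv x⟩⟩
  · rintro ⟨y, hy, rfl⟩
    obtain ⟨w, hw⟩ := isConj_iff.mp hy
    exact isConj_iff.mpr ⟨w, by rw [← hw]; group⟩

lemma nn_inv (g : G) :
    Nat.card (ConjClasses.mk g⁻¹).carrier = Nat.card (ConjClasses.mk g).carrier := by
  rw [cc_inv, Nat.card_coe_set_eq, Nat.card_coe_set_eq,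
    Set.ncard_image_of_injective _ inv_injective]

lemma card_sub (A B : Subgroup G) (h : A ≤ B) :
    Nat.card B = A.relIndex B * Nat.card A := by
  rw [← Subgroup.index_mul_card (A.subgroupOf B)]
  congr 1
  exact Nat.card_congr (Subgroup.subgroupOfEquivOfLe h).toEquiv

lemma covering (H K : Subgroup G) (hco : Nat.Coprime H.index K.index) (g : G) :
    ∃ h ∈ H, ∃ k ∈ K, g = h * k := by
  classical
  let f : (H ⧸ K.subgroupOf H) → (G ⧸ K) := fun x =>
    Quotient.liftOn' x (fun h => ((h : G) : G ⧸ K)) (by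
      intro a b hab
      rw [QuotientGroup.leftRel_apply] at hab
      have : ((a : G))⁻¹ * (b : G) ∈ K := hab
      exact QuotientGroup.eq.mpr this)
  have finj : Function.Injective f := by
    intro x y
    refine Quotient.inductionOn₂' x y ?_
    intro a b hab
    have : ((a : G))⁻¹ * (b : G) ∈ K := QuotientGroup.eq.mp hab
    exact Quotient.sound' (QuotientGroup.leftRel_apply.mpr this)
  have hcard1 : Nat.card (H ⧸ K.subgroupOf H) = K.relIndex H := rfl
  have hdvd1 : K.index ∣ K.relIndex H * H.index := by
    have h1 : (K ⊓ H).relIndex H * H.index = (K ⊓ H).index :=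
      Subgroup.relIndex_mul_index inf_le_right
    have h2 : (K ⊓ H).relIndex H = K.relIndex H := Subgroup.inf_relIndex_right K H
    have h3 : K.index ∣ (K ⊓ H).index := Subgroup.index_dvd_of_le inf_le_left
    rw [h2] at h1
    rw [h1]
    exact h3
  have hKrel : K.index ∣ K.relIndex H := (hco.symm).dvd_of_dvd_mul_right hdvd1
  have hle : K.relIndex H ≤ K.index := by
    rw [← hcard1]
    exact Nat.card_le_card_of_injective f finj
  have hne : K.relIndex H ≠ 0 := Subgroup.index_ne_zero_of_finite
  have heq : K.relIndex H = K.index :=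
    le_antisymm hle (Nat.le_of_dvd (Nat.pos_of_ne_zero hne) hKrel)
  have hsurj : Function.Surjective f := by
    have hbij : Function.Bijective f := by
      rw [Nat.bijective_iff_injective_and_card]
      exact ⟨finj, by rw [hcard1, heq]; rfl⟩
    exact hbij.2
  obtain ⟨x, hx⟩ := hsurj ((g : G ⧸ K))
  revert hx
  refine Quotient.inductionOn' x ?_
  intro h hh
  have hh' : ((h : G) : G ⧸ K) = (g : G ⧸ K) := hh
  have hk : ((h : G))⁻¹ * g ∈ K := QuotientGroup.eq.mp hh'
  exact ⟨h, h.2, (h : G)⁻¹ * g, hk, by group⟩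

lemma normal_le_of_coprime (T H : Subgroup G) (hn : T.Normal)
    (hco : Nat.Coprime (Nat.card T) H.index) : T ≤ H := by
  haveI := hn
  set J := H ⊔ T with hJ
  have hHJ : H ≤ J := le_sup_left
  have c1 : Nat.card J = H.relIndex J * Nat.card H := card_sub H J hHJ
  have c2 : Nat.card J = T.relIndex J * Nat.card T := card_sub T J le_sup_right
  have c3 : T.relIndex J = T.relIndex H := Subgroup.relIndex_sup_right H T
  have c4 : Nat.card H = T.relIndex H * Nat.card (T ⊓ H : Subgroup G) := by
    have := card_sub (T ⊓ H) H inf_le_right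
    rwa [Subgroup.inf_relIndex_right] at this
  have c5 : Nat.card T = H.relIndex T * Nat.card (H ⊓ T : Subgroup G) := by
    have := card_sub (H ⊓ T) T inf_le_right
    rwa [Subgroup.inf_relIndex_right] at this
  have carde : Nat.card (H ⊓ T : Subgroup G) = Nat.card (T ⊓ H : Subgroup G) := by
    rw [inf_comm]
  have hpos : 0 < T.relIndex H := Nat.pos_of_ne_zero Subgroup.index_ne_zero_of_finite
  have hposTH : 0 < Nat.card (T ⊓ H : Subgroup G) := Nat.card_pos
  have e1 : H.relIndex J * Nat.card H = T.relIndex H * Nat.card T := by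
    rw [← c1, ← c3, ← c2]
  have e2 : T.relIndex H * (H.relIndex J * Nat.card (T ⊓ H : Subgroup G))
      = T.relIndex H * (H.relIndex T * Nat.card (T ⊓ H : Subgroup G)) := by
    calc T.relIndex H * (H.relIndex J * Nat.card (T ⊓ H : Subgroup G))
        = H.relIndex J * (T.relIndex H * Nat.card (T ⊓ H : Subgroup G)) := by ring
      _ = H.relIndex J * Nat.card H := by rw [← c4]
      _ = T.relIndex H * Nat.card T := e1
      _ = T.relIndex H * (H.relIndex T * Nat.card (H ⊓ T : Subgroup G)) := by rw [← c5]
      _ = T.relIndex H * (H.relIndex T * Nat.card (T ⊓ H : Subgroup G)) := by rw [carde]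
  have e3 : H.relIndex J = H.relIndex T :=
    Nat.eq_of_mul_eq_mul_right hposTH (Nat.eq_of_mul_eq_mul_left hpos e2)
  have d1 : H.relIndex T ∣ H.index := by
    rw [← e3]
    exact ⟨J.index, (Subgroup.relIndex_mul_index hHJ).symm⟩
  have d2 : H.relIndex T ∣ Nat.card T := Subgroup.index_dvd_card (H.subgroupOf T)
  have hone : H.relIndex T = 1 :=
    Nat.eq_one_of_dvd_one ((Nat.dvd_gcd d2 d1).trans (dvd_of_eq hco))
  exact Subgroup.relIndex_eq_one.mp hone

/-- Product of two classes with coprime sizes is a single class. -/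
lemma cc_mul_cc (u c : G)
    (hco : Nat.Coprime (Nat.card (ConjClasses.mk u).carrier)
      (Nat.card (ConjClasses.mk c).carrier)) :
    (ConjClasses.mk u).carrier * (ConjClasses.mk c).carrier
      = (ConjClasses.mk (u * c)).carrier := by
  rw [card_cc, card_cc] at hco
  apply Set.Subset.antisymm
  · rintro z hz
    rw [Set.mem_mul] at hz
    obtain ⟨x, hx, y, hy, rfl⟩ := hz
    obtain ⟨g, hg⟩ := isConj_iff.mp (mem_cc.mp hx)
    obtain ⟨h, hh⟩ := isConj_iff.mp (mem_cc.mp hy)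
    obtain ⟨a, ha, b, hb, hab⟩ := covering _ _ hco (g⁻¹ * h)
    have hua : u * a = a * u := (Subgroup.mem_centralizer_iff.mp ha) u (by simp)
    have hbc : c * b = b * c := (Subgroup.mem_centralizer_iff.mp hb) c (by simp)
    have hh' : h = g * (a * b) := by
      have : g * (g⁻¹ * h) = g * (a * b) := by rw [hab]
      rwa [← mul_assoc, mul_inv_cancel, one_mul] at this
    have key : x * y = (g*a) * (u*c) * (g*a)⁻¹ := by
      rw [← hg, ← hh, hh']
      calc (g*u*g⁻¹) * ((g*(a*b))*c*(g*(a*b))⁻¹)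
          = g*u*(a*(b*c*b⁻¹))*a⁻¹*g⁻¹ := by group
        _ = g*u*(a*c)*a⁻¹*g⁻¹ := by rw [← hbc]; group
        _ = g*(u*a)*c*a⁻¹*g⁻¹ := by group
        _ = g*(a*u)*c*a⁻¹*g⁻¹ := by rw [hua]
        _ = (g*a)*(u*c)*(g*a)⁻¹ := by group
    exact mem_cc.mpr (isConj_iff.mpr ⟨g*a, key.symm⟩)
  · rintro z hz
    obtain ⟨w, hw⟩ := isConj_iff.mp (mem_cc.mp hz)
    rw [Set.mem_mul]
    exact ⟨w * u * w⁻¹, mem_cc.mpr (isConj_iff.mpr ⟨w, rfl⟩),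
      w * c * w⁻¹, mem_cc.mpr (isConj_iff.mpr ⟨w, rfl⟩), by rw [← hw]; group⟩

/-- size of (u*c)-class divides product of sizes, for coprime class sizes. -/
lemma nn_mul_dvd (u c : G)
    (hco : Nat.Coprime (Nat.card (ConjClasses.mk u).carrier)
      (Nat.card (ConjClasses.mk c).carrier)) :
    Nat.card (ConjClasses.mk (u*c)).carrier
      ∣ Nat.card (ConjClasses.mk u).carrier * Nat.card (ConjClasses.mk c).carrier := by
  rw [card_cc, card_cc, card_cc] at *
  set Hu := Subgroup.centralizer {u}
  set Hc := Subgroup.centralizer {c}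
  have hle : Hu ⊓ Hc ≤ Subgroup.centralizer {u*c} := by
    rintro a ⟨hau, hac⟩
    rw [Subgroup.mem_centralizer_iff] at *
    intro h hh
    rcases hh with rfl
    have h1 : u * a = a * u := hau u (by simp)
    have h2 : c * a = a * c := hac c (by simp)
    calc u * c * a = u * (c * a) := by group
      _ = u * (a * c) := by rw [h2]
      _ = (u * a) * c := by group
      _ = a * (u * c) := by rw [h1]; group
  have d1 : (Subgroup.centralizer {u*c}).index ∣ (Hu ⊓ Hc).index :=
    Subgroup.index_dvd_of_le hle
  have d2 : Hu.index * Hc.index ∣ (Hu ⊓ Hc).index :=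
    Nat.Coprime.mul_dvd_of_dvd_of_dvd hco
      (Subgroup.index_dvd_of_le inf_le_left) (Subgroup.index_dvd_of_le inf_le_right)
  have hle2 : (Hu ⊓ Hc).index ≤ Hu.index * Hc.index := Subgroup.index_inf_le
  have hpos : 0 < (Hu ⊓ Hc).index :=
    Nat.pos_of_ne_zero Subgroup.index_ne_zero_of_finite
  have heq : (Hu ⊓ Hc).index = Hu.index * Hc.index :=
    le_antisymm hle2 (Nat.le_of_dvd hpos d2)
  rw [← heq]
  exact d1

lemma smul_subset_mul_cc (u c : G) :
    u • (ConjClasses.mk c).carrier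
      ⊆ (ConjClasses.mk u).carrier * (ConjClasses.mk c).carrier := by
  rintro z ⟨y, hy, rfl⟩
  rw [Set.mem_mul]
  exact ⟨u, self_mem_cc u, y, hy, rfl⟩

/-- for coprime class sizes, the size of the product class is at least each size. -/
lemma nn_le_nn_mul (u c : G)
    (hco : Nat.Coprime (Nat.card (ConjClasses.mk u).carrier)
      (Nat.card (ConjClasses.mk c).carrier)) :
    Nat.card (ConjClasses.mk c).carrier ≤ Nat.card (ConjClasses.mk (u*c)).carrier := by
  have hsub : u • (ConjClasses.mk c).carrier ⊆ (ConjClasses.mk (u*c)).carrier := by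
    rw [← cc_mul_cc u c hco]
    exact smul_subset_mul_cc u c
  have h1 : Nat.card (u • (ConjClasses.mk c).carrier : Set G)
      = Nat.card (ConjClasses.mk c).carrier := Set.natCard_smul_set u _
  rw [← h1, Nat.card_coe_set_eq, Nat.card_coe_set_eq]
  exact Set.ncard_le_ncard hsub (Set.toFinite _)

/-- if additionally the sizes agree, the translate is the whole product class. -/
lemma smul_eq_cc_mul (u c : G)
    (hco : Nat.Coprime (Nat.card (ConjClasses.mk u).carrier)
      (Nat.card (ConjClasses.mk c).carrier))
    (hcard : Nat.card (ConjClasses.mk (u*c)).carrier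
      = Nat.card (ConjClasses.mk c).carrier) :
    u • (ConjClasses.mk c).carrier
      = (ConjClasses.mk u).carrier * (ConjClasses.mk c).carrier := by
  rw [cc_mul_cc u c hco]
  have hsub : u • (ConjClasses.mk c).carrier ⊆ (ConjClasses.mk (u*c)).carrier := by
    rw [← cc_mul_cc u c hco]
    exact smul_subset_mul_cc u c
  have h1 : Nat.card (u • (ConjClasses.mk c).carrier : Set G)
      = Nat.card (ConjClasses.mk c).carrier := Set.natCard_smul_set u _
  refine (Set.eq_of_subset_of_ncard_le hsub ?_ (Set.toFinite _))
  rw [← Nat.card_coe_set_eq, ← Nat.card_coe_set_eq, h1, hcard]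

lemma card_dvd_of_invariant (T : Subgroup G) (A : Set G)
    (hA : ∀ a ∈ A, ∀ t, t ∈ T → a * t ∈ A) : Nat.card T ∣ Nat.card A := by
  classical
  have hAeq : A = QuotientGroup.mk ⁻¹' (QuotientGroup.mk (s := T) '' A) := by
    apply Set.Subset.antisymm
    · intro a ha
      exact ⟨a, ha, rfl⟩
    · rintro x ⟨a, ha, hax⟩
      have : a⁻¹ * x ∈ T := QuotientGroup.eq.mp hax
      have := hA a ha _ this
      rwa [← mul_assoc, mul_inv_cancel, one_mul] at this
  have := Nat.card_congr (QuotientGroup.preimageMkEquivSubgroupProdSet T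
    (QuotientGroup.mk (s := T) '' A))
  rw [Nat.card_prod] at this
  rw [hAeq]
  exact ⟨_, this⟩

end Stmt14Aux

open Stmt14Aux

theorem stmt14 {G : Type*} [Group G] [Finite G] (N : Subgroup G) (hN : N.Normal)
    (h2 : Nat.card (GammaG G N).ConnectedComponent = 2)
    (B₀ : NCClass G N)
    (hmax : ∀ x ∈ N, Nat.card (ConjClasses.mk x).carrier ≤ Nat.card B₀.1.carrier)
    (S : Subgroup G)
    (hS : S = Subgroup.closure {x : G | ∃ B : NCClass G N,
        (GammaG G N).connectedComponentMk B ≠ (GammaG G N).connectedComponentMk B₀ ∧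
        x ∈ B.1.carrier})
    (T : Subgroup G)
    (hT : T = Subgroup.closure {x : G | ∃ B : NCClass G N,
        (GammaG G N).connectedComponentMk B ≠ (GammaG G N).connectedComponentMk B₀ ∧
        ∃ u ∈ B.1.carrier, ∃ v ∈ B.1.carrier, u * v⁻¹ = x}) :
    T = ⁅S, (⊤ : Subgroup G)⁆ ∧ T.Normal ∧
    T ≤ S ⊓ Subgroup.centralizer (S : Set G) ∧
    ∀ c ∈ N, c ∉ S → Nat.card T ∣ Nat.card (ConjClasses.mk c).carrier := by
  classical
  haveI hfin1 : Finite (ConjClasses G) := Quotient.finite _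
  haveI hfin2 : Finite (NCClass G N) := by
    unfold NCClass
    exact Subtype.finite
  haveI hfin3 : Finite ((GammaG G N).ConnectedComponent) := Quot.finite _
  -- abbreviation for components
  set cmp := (GammaG G N).connectedComponentMk with hcmp
  -- components agree along non-coprime classes
  have hcompeq : ∀ A B : NCClass G N,
      ¬ Nat.Coprime (Nat.card A.1.carrier) (Nat.card B.1.carrier) → cmp A = cmp B := by
    intro A B h
    by_cases hAB : A = B
    · rw [hAB]
    · exact SimpleGraph.ConnectedComponent.eq.mpr (SimpleGraph.Adj.reachable (show (GammaG G N).Adj A B from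
        (⟨hAB, h⟩ : A ≠ B ∧ ¬ Nat.Coprime (Nat.card A.1.carrier) (Nat.card B.1.carrier))))
  have hcop : ∀ A B : NCClass G N, cmp A ≠ cmp B →
      Nat.Coprime (Nat.card A.1.carrier) (Nat.card B.1.carrier) := by
    intro A B h
    by_contra hc
    exact h (hcompeq A B hc)
  -- the X₁ predicate
  set Xone : G → Prop := fun g => ∃ B : NCClass G N, cmp B ≠ cmp B₀ ∧ g ∈ B.1.carrier
    with hXone_def
  have hXoneN : ∀ g, Xone g → g ∈ N := by
    rintro g ⟨B, _, hgB⟩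
    obtain ⟨x, hxN, hxmk⟩ := B.2.1
    have h1 : ConjClasses.mk g = B.1 := ConjClasses.mem_carrier_iff_mk_eq.mp hgB
    have h2' : IsConj x g := ConjClasses.mk_eq_mk_iff_isConj.mp (hxmk.trans h1.symm)
    obtain ⟨w, hw⟩ := isConj_iff.mp h2'
    rw [← hw]
    exact hN.conj_mem x hxN w
  have hXonecard : ∀ g, Xone g → 1 < Nat.card (ConjClasses.mk g).carrier := by
    rintro g ⟨B, _, hgB⟩
    have h1 : ConjClasses.mk g = B.1 := ConjClasses.mem_carrier_iff_mk_eq.mp hgB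
    rw [h1]
    exact B.2.2
  have hXone_mk : ∀ g g', Xone g → ConjClasses.mk g' = ConjClasses.mk g → Xone g' := by
    rintro g g' ⟨B, hB, hgB⟩ hmk
    exact ⟨B, hB, ConjClasses.mem_carrier_iff_mk_eq.mpr
      (hmk.trans (ConjClasses.mem_carrier_iff_mk_eq.mp hgB))⟩
  have hcompV : ∀ g, Xone g → ∀ V : NCClass G N, V.1 = ConjClasses.mk g →
      cmp V ≠ cmp B₀ := by
    rintro g ⟨B, hB, hgB⟩ V hV
    have : V = B := Subtype.ext (hV.trans (ConjClasses.mem_carrier_iff_mk_eq.mp hgB))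
    rw [this]
    exact hB
  have hXone_of_V : ∀ V : NCClass G N, cmp V ≠ cmp B₀ →
      ∀ g, V.1 = ConjClasses.mk g → Xone g := by
    intro V h g hV
    exact ⟨V, h, ConjClasses.mem_carrier_iff_mk_eq.mpr hV.symm⟩
  -- the X₂ predicate
  set Xtwo : G → Prop := fun c =>
    c ∈ N ∧ 1 < Nat.card (ConjClasses.mk c).carrier ∧ ¬ Xone c with hXtwo_def
  have hcop12 : ∀ u c, Xone u → Xtwo c →
      Nat.Coprime (Nat.card (ConjClasses.mk u).carrier)
        (Nat.card (ConjClasses.mk c).carrier) := by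
    rintro u c hu ⟨hcN, hc1, hcX⟩
    obtain ⟨B, hB, huB⟩ := hu
    have hBmk : B.1 = ConjClasses.mk u := (ConjClasses.mem_carrier_iff_mk_eq.mp huB).symm
    set Vc : NCClass G N := ⟨ConjClasses.mk c, ⟨⟨c, hcN, rfl⟩, hc1⟩⟩ with hVc_def
    have hVc : cmp Vc = cmp B₀ := by
      by_contra h
      exact hcX (hXone_of_V Vc h c rfl)
    have hne : cmp B ≠ cmp Vc := by
      rw [hVc]
      exact hB
    have := hcop B Vc hne
    rwa [hBmk] at this
  -- Xone is closed under inverses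
  have hXone_inv : ∀ u, Xone u → Xone u⁻¹ := by
    intro u hu
    obtain ⟨B, hB, huB⟩ := hu
    have hBmk : B.1 = ConjClasses.mk u := (ConjClasses.mem_carrier_iff_mk_eq.mp huB).symm
    have huN : u ∈ N := hXoneN u ⟨B, hB, huB⟩
    have hc1 : 1 < Nat.card (ConjClasses.mk u⁻¹).carrier := by
      rw [nn_inv]
      exact hXonecard u ⟨B, hB, huB⟩
    set Vinv : NCClass G N := ⟨ConjClasses.mk u⁻¹, ⟨⟨u⁻¹, inv_mem huN, rfl⟩, hc1⟩⟩
      with hVinv_def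
    have hCV : cmp Vinv = cmp B := by
      apply hcompeq
      rw [hBmk]
      show ¬ Nat.Coprime (Nat.card (ConjClasses.mk u⁻¹).carrier)
        (Nat.card (ConjClasses.mk u).carrier)
      rw [nn_inv]
      intro h
      have h1 := coprime_self_one h
      have := hXonecard u ⟨B, hB, huB⟩
      omega
    have : cmp Vinv ≠ cmp B₀ := by
      rw [hCV]
      exact hB
    exact hXone_of_V Vinv this u⁻¹ rfl
  -- key translation lemma
  have htrans : ∀ c, Xtwo c → (∀ u, Xone u → ¬ Xone (u * c)) →
      ∀ u v, Xone u → ConjClasses.mk v = ConjClasses.mk u →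
        u • (ConjClasses.mk c).carrier = v • (ConjClasses.mk c).carrier := by
    intro c hc hside u v hu hmkvu
    have hv : Xone v := hXone_mk u v hu hmkvu
    have main : ∀ w, Xone w → w • (ConjClasses.mk c).carrier
        = (ConjClasses.mk w).carrier * (ConjClasses.mk c).carrier := by
      intro w hw
      have hcow := hcop12 w c hw hc
      have hwcN : w * c ∈ N := N.mul_mem (hXoneN w hw) hc.1
      have hge := nn_le_nn_mul w c hcow
      have h1wc : 1 < Nat.card (ConjClasses.mk (w*c)).carrier :=
        lt_of_lt_of_le hc.2.1 hge
      have hnotX : ¬ Xone (w * c) := hside w hw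
      set Vwc : NCClass G N := ⟨ConjClasses.mk (w*c), ⟨⟨w*c, hwcN, rfl⟩, h1wc⟩⟩
        with hVwc_def
      have hVwc : cmp Vwc = cmp B₀ := by
        by_contra h
        exact hnotX (hXone_of_V Vwc h (w*c) rfl)
      obtain ⟨B, hB, hwB⟩ := hw
      have hBmk : B.1 = ConjClasses.mk w := (ConjClasses.mem_carrier_iff_mk_eq.mp hwB).symm
      have hne : cmp B ≠ cmp Vwc := by
        rw [hVwc]
        exact hB
      have hcop2 := hcop B Vwc hne
      rw [hBmk] at hcop2
      -- hcop2 : Coprime (nn w) (nn (w*c))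
      have hdvd : Nat.card (ConjClasses.mk (w*c)).carrier
          ∣ Nat.card (ConjClasses.mk w).carrier * Nat.card (ConjClasses.mk c).carrier :=
        nn_mul_dvd w c hcow
      have hdvd2 : Nat.card (ConjClasses.mk (w*c)).carrier
          ∣ Nat.card (ConjClasses.mk c).carrier :=
        (hcop2.symm).dvd_of_dvd_mul_left hdvd
      have heqn : Nat.card (ConjClasses.mk (w*c)).carrier
          = Nat.card (ConjClasses.mk c).carrier :=
        le_antisymm (Nat.le_of_dvd (nn_pos c) hdvd2) hge
      exact smul_eq_cc_mul w c hcow heqn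
    have hcceq : (ConjClasses.mk v).carrier = (ConjClasses.mk u).carrier := by
      rw [hmkvu]
    rw [main u hu, main v hv, hcceq]
  -- T stabilizes classes (on the left) for suitable c
  have hstab : ∀ c, Xtwo c → (∀ u, Xone u → ¬ Xone (u * c)) →
      ∀ t, t ∈ T → t • (ConjClasses.mk c).carrier = (ConjClasses.mk c).carrier := by
    intro c hc hside
    set Stab : Subgroup G :=
      { carrier := {g : G | g • (ConjClasses.mk c).carrier = (ConjClasses.mk c).carrier}
        one_mem' := by simp
        mul_mem' := by
          intro a b ha hb
          show (a * b) • _ = _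
          rw [mul_smul, hb, ha]
        inv_mem' := by
          intro a ha
          show a⁻¹ • _ = _
          conv_lhs => rw [← ha]
          rw [inv_smul_smul] } with hStab_def
    have hTS : T ≤ Stab := by
      rw [hT]
      apply (Subgroup.closure_le _).mpr
      rintro x ⟨B, hB, u, hu, v, hv, rfl⟩
      have hXu : Xone u := ⟨B, hB, hu⟩
      have hmkuv : ConjClasses.mk u = ConjClasses.mk v :=
        (ConjClasses.mem_carrier_iff_mk_eq.mp hu).trans
          (ConjClasses.mem_carrier_iff_mk_eq.mp hv).symm
      have hconj : IsConj u v := ConjClasses.mk_eq_mk_iff_isConj.mp hmkuv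
      have hXuinv : Xone u⁻¹ := hXone_inv u hXu
      have hmkinv : ConjClasses.mk v⁻¹ = ConjClasses.mk u⁻¹ := by
        rw [ConjClasses.mk_eq_mk_iff_isConj]
        obtain ⟨w, hw⟩ := isConj_iff.mp hconj
        exact (isConj_iff.mpr ⟨w, by rw [← hw]; group⟩).symm
      have := htrans c hc hside u⁻¹ v⁻¹ hXuinv hmkinv
      show (u * v⁻¹) • (ConjClasses.mk c).carrier = (ConjClasses.mk c).carrier
      rw [mul_smul, ← this, smul_inv_smul]
    intro t ht
    exact hTS ht
  -- divisibility from stabilization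
  have hdvdc : ∀ c, Xtwo c → (∀ u, Xone u → ¬ Xone (u * c)) →
      Nat.card T ∣ Nat.card (ConjClasses.mk c).carrier := by
    intro c hc hside
    set A : Set G := Inv.inv '' (ConjClasses.mk c).carrier with hA_def
    have hAcard : Nat.card A = Nat.card (ConjClasses.mk c).carrier := by
      rw [Nat.card_coe_set_eq, Nat.card_coe_set_eq, hA_def,
        Set.ncard_image_of_injective _ inv_injective]
    have hAinv : ∀ a ∈ A, ∀ t, t ∈ T → a * t ∈ A := by
      rintro a ⟨y, hy, rfl⟩ t ht
      have hstabt := hstab c hc hside t⁻¹ (inv_mem ht)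
      have : t⁻¹ * y ∈ (ConjClasses.mk c).carrier := by
        rw [← hstabt]
        exact ⟨y, hy, rfl⟩
      exact ⟨t⁻¹ * y, this, by group⟩
    calc Nat.card T ∣ Nat.card A := card_dvd_of_invariant T A hAinv
      _ = _ := hAcard
  -- B₀'s representative
  obtain ⟨b₀, hb₀N, hb₀mk⟩ := B₀.2.1
  have hb0card : Nat.card B₀.1.carrier = Nat.card (ConjClasses.mk b₀).carrier := by
    rw [hb₀mk]
  have hXtwo0 : Xtwo b₀ := by
    refine ⟨hb₀N, ?_, ?_⟩
    · rw [← hb0card]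
      exact B₀.2.2
    · intro hX
      exact (hcompV b₀ hX B₀ hb₀mk.symm) rfl
  have hside0 : ∀ u, Xone u → ¬ Xone (u * b₀) := by
    intro u hu hX
    have hco1 := hcop12 u b₀ hu hXtwo0
    have hd := nn_mul_dvd u b₀ hco1
    have hco2 := hcop12 (u*b₀) b₀ hX hXtwo0
    have hd2 : Nat.card (ConjClasses.mk (u*b₀)).carrier
        ∣ Nat.card (ConjClasses.mk u).carrier := hco2.dvd_of_dvd_mul_right hd
    have hle' : Nat.card (ConjClasses.mk (u*b₀)).carrier
        ≤ Nat.card (ConjClasses.mk u).carrier := Nat.le_of_dvd (nn_pos u) hd2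
    have hmaxu : Nat.card (ConjClasses.mk u).carrier
        ≤ Nat.card (ConjClasses.mk b₀).carrier := by
      have := hmax u (hXoneN u hu)
      rwa [hb0card] at this
    have hge := nn_le_nn_mul u b₀ hco1
    have heqn : Nat.card (ConjClasses.mk (u*b₀)).carrier
        = Nat.card (ConjClasses.mk b₀).carrier :=
      le_antisymm (hle'.trans hmaxu) hge
    rw [heqn] at hco2
    have h1 := coprime_self_one hco2
    have h2' := hXtwo0.2.1
    omega
  have hTb0 : Nat.card T ∣ Nat.card (ConjClasses.mk b₀).carrier :=
    hdvdc b₀ hXtwo0 hside0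
  -- T is normal
  have hTnormal : T.Normal := by
    constructor
    intro n hn g
    rw [hT] at hn ⊢
    induction hn using Subgroup.closure_induction with
    | mem x hx =>
      obtain ⟨B, hB, u, hu, v, hv, rfl⟩ := hx
      apply Subgroup.subset_closure
      exact ⟨B, hB, g * u * g⁻¹, conj_mem_carrier hu g,
        g * v * g⁻¹, conj_mem_carrier hv g, by group⟩
    | one =>
      rw [mul_one, mul_inv_cancel]
      exact one_mem _
    | mul x y hx hy ihx ihy =>
      have : g * (x * y) * g⁻¹ = (g * x * g⁻¹) * (g * y * g⁻¹) := by group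
      rw [this]
      exact mul_mem ihx ihy
    | inv x hx ih =>
      have : g * x⁻¹ * g⁻¹ = (g * x * g⁻¹)⁻¹ := by group
      rw [this]
      exact inv_mem ih
  -- T ≤ S
  have hTleS : T ≤ S := by
    rw [hT]
    apply (Subgroup.closure_le _).mpr
    rintro x ⟨B, hB, u, hu, v, hv, rfl⟩
    have hu' : u ∈ S := hS ▸ Subgroup.subset_closure ⟨B, hB, hu⟩
    have hv' : v ∈ S := hS ▸ Subgroup.subset_closure ⟨B, hB, hv⟩
    exact mul_mem hu' (inv_mem hv')
  -- T centralizes every X₁ class element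
  have hTcent : ∀ x, Xone x → T ≤ Subgroup.centralizer {x} := by
    intro x hx
    apply normal_le_of_coprime T _ hTnormal
    have hco1 := (hcop12 x b₀ hx hXtwo0).symm
    have hco2 : Nat.Coprime (Nat.card T) (Nat.card (ConjClasses.mk x).carrier) :=
      Nat.Coprime.coprime_dvd_left hTb0 hco1
    rwa [card_cc] at hco2
  -- main goals
  refine ⟨?_, hTnormal, ?_, ?_⟩
  · -- T = [S, ⊤]
    apply le_antisymm
    · rw [hT]
      apply (Subgroup.closure_le _).mpr
      rintro x ⟨B, hB, u, hu, v, hv, rfl⟩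
      have hmkuv : ConjClasses.mk u = ConjClasses.mk v :=
        (ConjClasses.mem_carrier_iff_mk_eq.mp hu).trans
          (ConjClasses.mem_carrier_iff_mk_eq.mp hv).symm
      obtain ⟨w, hw⟩ := isConj_iff.mp (ConjClasses.mk_eq_mk_iff_isConj.mp hmkuv)
      have hcomm : u * v⁻¹ = ⁅u, w⁆ := by
        rw [commutatorElement_def, ← hw]
        group
      have hu' : u ∈ S := hS ▸ Subgroup.subset_closure ⟨B, hB, hu⟩
      rw [SetLike.mem_coe, hcomm]
      exact Subgroup.commutator_mem_commutator hu' (Subgroup.mem_top w)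
    · rw [Subgroup.commutator_le]
      intro s hs g _
      haveI := hTnormal
      have hSc : S ≤ Subgroup.comap (QuotientGroup.mk' T)
          (Subgroup.center (G ⧸ T)) := by
        rw [hS]
        apply (Subgroup.closure_le _).mpr
        rintro x ⟨B, hB, hx⟩
        have hXx : Xone x := ⟨B, hB, hx⟩
        rw [SetLike.mem_coe, Subgroup.mem_comap, Subgroup.mem_center_iff]
        intro q
        induction q using QuotientGroup.induction_on with
        | H g' =>
          show ((g' * x : G) : G ⧸ T) = ((x * g' : G) : G ⧸ T)
          rw [QuotientGroup.eq]
          have hgen : (g' * x)⁻¹ * (x * g') = x⁻¹ * (g'⁻¹ * x⁻¹ * g')⁻¹ := by group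
          rw [hT, hgen]
          apply Subgroup.subset_closure
          have hXxinv : Xone x⁻¹ := hXone_inv x hXx
          obtain ⟨B', hB', hx'⟩ := hXxinv
          refine ⟨B', hB', x⁻¹, hx', g'⁻¹ * x⁻¹ * g', ?_, rfl⟩
          have := conj_mem_carrier hx' g'⁻¹
          simpa using this
      have hπs := hSc hs
      rw [Subgroup.mem_comap, Subgroup.mem_center_iff] at hπs
      have h1 : (QuotientGroup.mk' T) ⁅s, g⁆ = 1 := by
        rw [map_commutatorElement]
        have hcomm : Commute ((QuotientGroup.mk' T) s) ((QuotientGroup.mk' T) g) :=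
          (hπs ((QuotientGroup.mk' T) g)).symm
        exact commutatorElement_eq_one_iff_commute.mpr hcomm
      rwa [← QuotientGroup.ker_mk' T, MonoidHom.mem_ker]
  · -- T ≤ S ⊓ centralizer S
    refine le_inf hTleS ?_
    intro t ht
    rw [Subgroup.mem_centralizer_iff]
    intro s hs
    have hScent : S ≤ Subgroup.centralizer {t} := by
      rw [hS]
      apply (Subgroup.closure_le _).mpr
      rintro x ⟨B, hB, hx⟩
      have hXx : Xone x := ⟨B, hB, hx⟩
      have := hTcent x hXx ht
      rw [SetLike.mem_coe, Subgroup.mem_centralizer_iff]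
      rintro h hh
      rcases hh with rfl
      exact ((Subgroup.mem_centralizer_iff.mp this) x rfl).symm
    have := (Subgroup.mem_centralizer_iff.mp (hScent hs)) t rfl
    exact this.symm
  · -- divisibility
    intro c hcN hcS
    by_cases hc1 : 1 < Nat.card (ConjClasses.mk c).carrier
    · have hcX : ¬ Xone c := by
        intro hX
        exact hcS (hS ▸ Subgroup.subset_closure hX)
      have hXtwoc : Xtwo c := ⟨hcN, hc1, hcX⟩
      have hside : ∀ u, Xone u → ¬ Xone (u * c) := by
        intro u hu hX
        have hu' : u ∈ S := hS ▸ Subgroup.subset_closure hu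
        have huc' : u * c ∈ S := hS ▸ Subgroup.subset_closure hX
        have : c ∈ S := by
          have := mul_mem (inv_mem hu') huc'
          rwa [← mul_assoc, inv_mul_cancel, one_mul] at this
        exact hcS this
      exact hdvdc c hXtwoc hside
    · -- c is central; show c ∈ S, contradiction
      exfalso
      apply hcS
      have hc1' : Nat.card (ConjClasses.mk c).carrier = 1 := by
        have := nn_pos c
        omega
      have hcc : (ConjClasses.mk c).carrier = {c} := by
        obtain ⟨a, ha⟩ := Set.ncard_eq_one.mp (by
          rw [← Nat.card_coe_set_eq]; exact hc1')
        have hmem := self_mem_cc c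
        rw [ha] at hmem ⊢
        rw [Set.mem_singleton_iff] at hmem
        rw [hmem]
      have hcent : ∀ g : G, g * c * g⁻¹ = c := by
        intro g
        have := conj_mem_cc (self_mem_cc c) g
        rw [hcc] at this
        exact this
      -- existence of an X₁ vertex
      have hnontriv : Nontrivial ((GammaG G N).ConnectedComponent) :=
        Finite.one_lt_card_iff_nontrivial.mp (by rw [h2]; norm_num)
      obtain ⟨K, hK⟩ := exists_ne (cmp B₀)
      obtain ⟨B1, hB1⟩ := K.exists_rep
      have hB1ne : cmp B1 ≠ cmp B₀ := by
        rw [hcmp]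
        rw [← hB1] at hK
        exact hK
      obtain ⟨x₁, hx₁N, hx₁mk⟩ := B1.2.1
      have hXx₁ : Xone x₁ := ⟨B1, hB1ne, ConjClasses.mem_carrier_iff_mk_eq.mpr hx₁mk⟩
      -- class of x₁ * c is the translate of class of x₁
      have hcomm : ∀ g : G, g * c = c * g := fun g => mul_inv_eq_iff_eq_mul.mp (hcent g)
      have himg : (ConjClasses.mk (x₁ * c)).carrier
          = (fun y => y * c) '' (ConjClasses.mk x₁).carrier := by
        ext z
        rw [mem_cc]
        constructor
        · intro h
          obtain ⟨w, hw⟩ := isConj_iff.mp h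
          refine ⟨w * x₁ * w⁻¹, conj_mem_cc (self_mem_cc x₁) w, ?_⟩
          rw [← hw]
          show w * x₁ * w⁻¹ * c = w * (x₁ * c) * w⁻¹
          calc w * x₁ * w⁻¹ * c = w * x₁ * (w⁻¹ * c) := by group
            _ = w * x₁ * (c * w⁻¹) := by rw [hcomm w⁻¹]
            _ = w * (x₁ * c) * w⁻¹ := by group
        · rintro ⟨y, hy, rfl⟩
          obtain ⟨w, hw⟩ := isConj_iff.mp (mem_cc.mp hy)
          refine isConj_iff.mpr ⟨w, ?_⟩
          calc w * (x₁ * c) * w⁻¹ = (w * x₁ * w⁻¹) * (w * c * w⁻¹) := by group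
            _ = y * c := by rw [hw, hcent w]
      have hcardeq : Nat.card (ConjClasses.mk (x₁ * c)).carrier
          = Nat.card (ConjClasses.mk x₁).carrier := by
        rw [himg, Nat.card_coe_set_eq, Nat.card_coe_set_eq,
          Set.ncard_image_of_injective _ (mul_left_injective c)]
      have hx₁card : 1 < Nat.card (ConjClasses.mk x₁).carrier := hXonecard x₁ hXx₁
      have hc1'' : 1 < Nat.card (ConjClasses.mk (x₁ * c)).carrier := by
        rw [hcardeq]; exact hx₁card
      have hx₁cN : x₁ * c ∈ N := N.mul_mem hx₁N hcN
      set Vxc : NCClass G N := ⟨ConjClasses.mk (x₁ * c), ⟨⟨x₁ * c, hx₁cN, rfl⟩, hc1''⟩⟩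
        with hVxc_def
      have hsame : cmp Vxc = cmp B1 := by
        apply hcompeq
        have hB1mk : B1.1 = ConjClasses.mk x₁ := hx₁mk.symm
        rw [hB1mk]
        show ¬ Nat.Coprime (Nat.card (ConjClasses.mk (x₁*c)).carrier)
          (Nat.card (ConjClasses.mk x₁).carrier)
        rw [hcardeq]
        intro h
        have h1 := coprime_self_one h
        omega
      have hVne : cmp Vxc ≠ cmp B₀ := by
        rw [hsame]
        exact hB1ne
      have hXxc : Xone (x₁ * c) := hXone_of_V Vxc hVne (x₁ * c) rfl
      have h1 : x₁ ∈ S := hS ▸ Subgroup.subset_closure hXx₁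
      have h2' : x₁ * c ∈ S := hS ▸ Subgroup.subset_closure hXxc
      have := mul_mem (inv_mem h1) h2'
      rwa [← mul_assoc, inv_mul_cancel, one_mul] at this
end

section
/- Let G be a finite group, N ⊴ G with Γ_G(N) connected, B₀ a class of maximal size among G-classes of elements of N. Let M = ⟨D : D a G-class of an element of N with d(B₀, D) ≥ 2⟩ and K = ⟨D⁻¹D : D a G-class of an element of N with d(B₀, D) ≥ 2⟩. Then M and K are normal in G, K = [M, G], K ≤ Z(M), and M is abelian. -/
open scoped Classical

section AuxStmt17

variable {G : Type*} [Group G]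

lemma stmt17_conj_mem_carrier {C : ConjClasses G} {z : G} (hz : z ∈ C.carrier) (g : G) :
    g * z * g⁻¹ ∈ C.carrier := by
  rw [ConjClasses.mem_carrier_iff_mk_eq] at hz ⊢
  rw [← hz]
  exact ConjClasses.mk_eq_mk_iff_isConj.2 (isConj_iff.2 ⟨g, rfl⟩).symm

lemma stmt17_exists_conj {C : ConjClasses G} {u v : G} (hu : u ∈ C.carrier)
    (hv : v ∈ C.carrier) : ∃ w : G, w * u * w⁻¹ = v := by
  rw [ConjClasses.mem_carrier_iff_mk_eq] at hu hv
  exact isConj_iff.1 (ConjClasses.mk_eq_mk_iff_isConj.1 (hu.trans hv.symm))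

lemma stmt17_card_carrier_eq_index (x : G) :
    Nat.card (ConjClasses.mk x).carrier = (Subgroup.centralizer {x}).index := by
  have h1 : Nat.card (ConjClasses.mk x).carrier
      = Nat.card (MulAction.orbit (ConjAct G) x) := by
    rw [ConjAct.orbit_eq_carrier_conjClasses]
  rw [h1, Nat.card_congr (MulAction.orbitEquivQuotientStabilizer (ConjAct G) x),
    Subgroup.centralizer_eq_comap_stabilizer]
  erw [Subgroup.index_comap_of_surjective _ (MulEquiv.surjective _)]
  rfl

lemma stmt17_relindex_dvd_index_of_normal [Finite G] (Msub C : Subgroup G) [Msub.Normal] :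
    C.relIndex Msub ∣ C.index := by
  have h1 : C.relIndex Msub * Msub.index = (C ⊓ Msub).index := by
    rw [← Subgroup.inf_relIndex_right C Msub]
    exact Subgroup.relIndex_mul_index (inf_le_right : C ⊓ Msub ≤ Msub)
  have h2 : Msub.relIndex C * C.index = (C ⊓ Msub).index := by
    rw [← Subgroup.inf_relIndex_left C Msub]
    exact Subgroup.relIndex_mul_index (inf_le_left : C ⊓ Msub ≤ C)
  obtain ⟨t, ht⟩ := Subgroup.relIndex_dvd_index_of_normal Msub C
  have hr0 : Msub.relIndex C ≠ 0 := by
    have : (Msub.subgroupOf C).index ≠ 0 := Subgroup.index_ne_zero_of_finite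
    exact this
  refine ⟨t, ?_⟩
  have h3 : Msub.relIndex C * (C.relIndex Msub * t) = Msub.relIndex C * C.index := by
    rw [show Msub.relIndex C * (C.relIndex Msub * t)
        = C.relIndex Msub * (Msub.relIndex C * t) from by ring, ← ht, h1, h2]
  exact (Nat.eq_of_mul_eq_mul_left (Nat.pos_of_ne_zero hr0) h3).symm

lemma stmt17_decomp [Finite G] {x u : G}
    (hco : Nat.Coprime ((Subgroup.centralizer {x}).index) ((Subgroup.centralizer {u}).index))
    (g : G) :
    ∃ a ∈ Subgroup.centralizer ({u} : Set G), ∃ b ∈ Subgroup.centralizer ({x} : Set G),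
      g = a * b := by
  set Cx := Subgroup.centralizer ({x} : Set G) with hCx
  set Cu := Subgroup.centralizer ({u} : Set G) with hCu
  have hCu0 : Cu.index ≠ 0 := Subgroup.index_ne_zero_of_finite
  have hJ0 : (Cx ⊓ Cu).index ≠ 0 := Subgroup.index_ne_zero_of_finite
  have hdvd : Cx.index * Cu.index ∣ (Cx ⊓ Cu).index :=
    Nat.Coprime.mul_dvd_of_dvd_of_dvd hco
      (Subgroup.index_dvd_of_le inf_le_left) (Subgroup.index_dvd_of_le inf_le_right)
  have hJ : (Cx ⊓ Cu).index = Cx.index * Cu.index :=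
    le_antisymm (Subgroup.index_inf_le (H := Cx) (K := Cu))
      (Nat.le_of_dvd (Nat.pos_of_ne_zero hJ0) hdvd)
  have hrel : Cx.relIndex Cu = Cx.index := by
    have h := Subgroup.relIndex_mul_index (inf_le_right : Cx ⊓ Cu ≤ Cu)
    rw [Subgroup.inf_relIndex_right, hJ] at h
    exact Nat.eq_of_mul_eq_mul_right (Nat.pos_of_ne_zero hCu0) h
  let f : Cu ⧸ Cx.subgroupOf Cu → G ⧸ Cx :=
    Quotient.map' Subtype.val (fun a b h => by
      rw [QuotientGroup.leftRel_apply] at h ⊢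
      exact h)
  have hinj : Function.Injective f := by
    intro a b
    induction a using Quotient.inductionOn' with | h a =>
    induction b using Quotient.inductionOn' with | h b =>
    intro hab
    have h2 : (↑(a : G) : G ⧸ Cx) = ↑(b : G) := hab
    rw [QuotientGroup.eq] at h2
    apply Quotient.sound'
    rw [QuotientGroup.leftRel_apply]
    exact h2
  have hcard : Nat.card (Cu ⧸ Cx.subgroupOf Cu) = Nat.card (G ⧸ Cx) := by
    have e1 : Nat.card (Cu ⧸ Cx.subgroupOf Cu) = Cx.relIndex Cu := rfl
    have e2 : Nat.card (G ⧸ Cx) = Cx.index := rfl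
    rw [e1, e2, hrel]
  have hbij : Function.Bijective f :=
    (Nat.bijective_iff_injective_and_card f).2 ⟨hinj, hcard⟩
  obtain ⟨c, hc⟩ := hbij.2 ((g : G ⧸ Cx))
  induction c using Quotient.inductionOn' with | h c =>
  have hc' : (↑(c : G) : G ⧸ Cx) = ↑g := hc
  rw [QuotientGroup.eq] at hc'
  exact ⟨c, c.2, (c : G)⁻¹ * g, hc', by group⟩

lemma stmt17_closure_normal_of_conj {S : Set G}
    (h : ∀ s ∈ S, ∀ g : G, g * s * g⁻¹ ∈ S) : (Subgroup.closure S).Normal := by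
  constructor
  intro n hn g
  induction hn using Subgroup.closure_induction with
  | mem s hs => exact Subgroup.subset_closure (h s hs g)
  | one => simpa using (Subgroup.closure S).one_mem
  | mul a b _ _ ha hb =>
      have : g * (a * b) * g⁻¹ = (g * a * g⁻¹) * (g * b * g⁻¹) := by group
      rw [this]; exact mul_mem ha hb
  | inv a _ ha =>
      have : g * a⁻¹ * g⁻¹ = (g * a * g⁻¹)⁻¹ := by group
      rw [this]; exact inv_mem ha

end AuxStmt17

open Pointwise
open scoped commutatorElement

theorem stmt17 {G : Type*} [Group G] [Finite G] (N : Subgroup G) (hN : N.Normal)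
    (hconn : (GammaG G N).Connected)
    (B₀ : NCClass G N)
    (hmax : ∀ x ∈ N, Nat.card (ConjClasses.mk x).carrier ≤ Nat.card B₀.1.carrier)
    (M : Subgroup G)
    (hM : M = Subgroup.closure {x : G | ∃ D : NCClass G N,
        2 ≤ (GammaG G N).dist B₀ D ∧ x ∈ D.1.carrier})
    (K : Subgroup G)
    (hK : K = Subgroup.closure {x : G | ∃ D : NCClass G N,
        2 ≤ (GammaG G N).dist B₀ D ∧ ∃ u ∈ D.1.carrier, ∃ v ∈ D.1.carrier, u⁻¹ * v = x}) :
    M.Normal ∧ K.Normal ∧ K = ⁅M, (⊤ : Subgroup G)⁆ ∧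
    K ≤ M ⊓ Subgroup.centralizer (M : Set G) ∧
    ∀ a ∈ M, ∀ b ∈ M, a * b = b * a := by
  classical
  obtain ⟨x₀, hx₀N, hx₀mk⟩ := B₀.2.1
  have hx₀S : x₀ ∈ B₀.1.carrier := by
    rw [← hx₀mk]; exact ConjClasses.mem_carrier_mk
  -- far classes have size coprime to that of B₀
  have hfar : ∀ D : NCClass G N, 2 ≤ (GammaG G N).dist B₀ D →
      Nat.Coprime (Nat.card B₀.1.carrier) (Nat.card D.1.carrier) := by
    intro D hD
    have hne : B₀ ≠ D := by
      rintro rfl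
      rw [SimpleGraph.dist_self] at hD
      omega
    by_contra hc
    have hadj : (GammaG G N).Adj B₀ D := ⟨hne, hc⟩
    rw [← SimpleGraph.dist_eq_one_iff_adj] at hadj
    omega
  -- elements of carriers lie in N
  have hcarrN : ∀ D : NCClass G N, ∀ y ∈ D.1.carrier, y ∈ N := by
    intro D y hy
    obtain ⟨z, hzN, hzmk⟩ := D.2.1
    rw [ConjClasses.mem_carrier_iff_mk_eq] at hy
    obtain ⟨c, hc⟩ := isConj_iff.1 (ConjClasses.mk_eq_mk_iff_isConj.1 (hzmk.trans hy.symm))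
    rw [← hc]
    exact hN.conj_mem z hzN c
  -- cardinality of a class via centralizer index
  have hcardD : ∀ D : NCClass G N, ∀ u ∈ D.1.carrier,
      Nat.card D.1.carrier = (Subgroup.centralizer {u}).index := by
    intro D u hu
    rw [ConjClasses.mem_carrier_iff_mk_eq] at hu
    rw [← hu, stmt17_card_carrier_eq_index]
  -- decomposition G = C(u) C(x₀)
  have hdec : ∀ D : NCClass G N, 2 ≤ (GammaG G N).dist B₀ D → ∀ u ∈ D.1.carrier, ∀ g : G,
      ∃ a ∈ Subgroup.centralizer ({u} : Set G), ∃ b ∈ Subgroup.centralizer ({x₀} : Set G),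
        g = a * b := by
    intro D hD u hu g
    have hco : Nat.Coprime ((Subgroup.centralizer {x₀}).index)
        ((Subgroup.centralizer {u}).index) := by
      have h := hfar D hD
      rwa [hcardD B₀ x₀ hx₀S, hcardD D u hu] at h
    exact stmt17_decomp hco g
  -- translated set u • B₀ is a full conjugacy class
  have hTset : ∀ D : NCClass G N, 2 ≤ (GammaG G N).dist B₀ D → ∀ u ∈ D.1.carrier,
      (u * ·) '' B₀.1.carrier = (ConjClasses.mk (u * x₀)).carrier := by
    intro D hD u hu
    have hsub : (u * ·) '' B₀.1.carrier ⊆ (ConjClasses.mk (u * x₀)).carrier := by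
      rintro _ ⟨y, hy, rfl⟩
      obtain ⟨h, hh⟩ := stmt17_exists_conj hx₀S hy
      obtain ⟨a, ha, b, hb, hab⟩ := hdec D hD u hu h
      have hbx : b * x₀ * b⁻¹ = x₀ := by
        have hc := (Subgroup.mem_centralizer_iff.1 hb) x₀ rfl
        rw [show b * x₀ = x₀ * b from hc.symm, mul_assoc, mul_inv_cancel, mul_one]
      have hau : u * a = a * u := (Subgroup.mem_centralizer_iff.1 ha) u rfl
      have key : u * y = a * (u * x₀) * a⁻¹ := by
        rw [← hh, hab]
        have e1 : a * b * x₀ * (a * b)⁻¹ = a * x₀ * a⁻¹ := by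
          rw [mul_inv_rev,
            show a * b * x₀ * (b⁻¹ * a⁻¹) = a * (b * x₀ * b⁻¹) * a⁻¹ from by group, hbx]
        rw [e1, show u * (a * x₀ * a⁻¹) = (u * a) * x₀ * a⁻¹ from by group, hau]
        group
      show u * y ∈ (ConjClasses.mk (u * x₀)).carrier
      rw [key]
      exact stmt17_conj_mem_carrier ConjClasses.mem_carrier_mk a
    have hfin : ((ConjClasses.mk (u * x₀)).carrier).Finite := Set.toFinite _
    have hcard1 : ((u * ·) '' B₀.1.carrier).ncard = (B₀.1.carrier).ncard :=
      Set.ncard_image_of_injective _ (mul_right_injective u)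
    have hcard2 : ((ConjClasses.mk (u * x₀)).carrier).ncard ≤ (B₀.1.carrier).ncard := by
      have h := hmax (u * x₀) (N.mul_mem (hcarrN D u hu) hx₀N)
      rwa [← Nat.card_coe_set_eq, ← Nat.card_coe_set_eq]
    exact Set.eq_of_subset_of_ncard_le hsub (by rw [hcard1]; exact hcard2) hfin
  -- all translates by elements of a far class coincide
  have htsub : ∀ D : NCClass G N, 2 ≤ (GammaG G N).dist B₀ D →
      ∀ u ∈ D.1.carrier, ∀ v ∈ D.1.carrier,
      (v * ·) '' B₀.1.carrier ⊆ (u * ·) '' B₀.1.carrier := by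
    intro D hD u hu v hv
    rintro _ ⟨y, hy, rfl⟩
    obtain ⟨w, hw⟩ := stmt17_exists_conj hu hv
    have hy' : w⁻¹ * y * w ∈ B₀.1.carrier := by
      have h := stmt17_conj_mem_carrier hy w⁻¹
      rwa [inv_inv] at h
    have hmem : u * (w⁻¹ * y * w) ∈ (u * ·) '' B₀.1.carrier := ⟨_, hy', rfl⟩
    rw [hTset D hD u hu] at hmem
    have hmem2 := stmt17_conj_mem_carrier hmem w
    rw [← hTset D hD u hu] at hmem2
    have heq : v * y = w * (u * (w⁻¹ * y * w)) * w⁻¹ := by rw [← hw]; group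
    show v * y ∈ (u * ·) '' B₀.1.carrier
    rw [heq]
    exact hmem2
  -- the left stabilizer of B₀'s carrier
  set L : Subgroup G := MulAction.stabilizer G (B₀.1.carrier) with hLdef
  -- generators of K lie in L
  have hKL : K ≤ L := by
    rw [hK]
    refine (Subgroup.closure_le _).2 ?_
    rintro s ⟨D, hD, u, hu, v, hv, rfl⟩
    rw [SetLike.mem_coe, hLdef, MulAction.mem_stabilizer_iff]
    apply Set.Subset.antisymm
    · rintro _ hz
      obtain ⟨y, hy, rfl⟩ := Set.mem_smul_set.1 hz
      have : v * y ∈ (u * ·) '' B₀.1.carrier := htsub D hD u hu v hv ⟨y, hy, rfl⟩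
      obtain ⟨y', hy', hyy'⟩ := this
      have hyy'2 : u * y' = v * y := hyy'
      have heq : (u⁻¹ * v) • y = y' := by
        rw [smul_eq_mul, show u⁻¹ * v * y = u⁻¹ * (v * y) from by group, ← hyy'2]
        group
      rw [heq]
      exact hy'
    · intro z hz
      have : u * z ∈ (v * ·) '' B₀.1.carrier := htsub D hD v hv u hu ⟨z, hz, rfl⟩
      obtain ⟨y'', hy'', hyy''⟩ := this
      have hyy''2 : v * y'' = u * z := hyy''
      refine Set.mem_smul_set.2 ⟨y'', hy'', ?_⟩
      rw [smul_eq_mul, show u⁻¹ * v * y'' = u⁻¹ * (v * y'') from by group, hyy''2]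
      group
  -- |L| divides |B₀|
  have hLdvd : Nat.card L ∣ Nat.card B₀.1.carrier := by
    set Sinv : Set G := (·⁻¹) '' B₀.1.carrier with hSinvdef
    have hsat : (QuotientGroup.mk (s := L) ⁻¹' (QuotientGroup.mk (s := L) '' Sinv) : Set G)
        = Sinv := by
      apply Set.Subset.antisymm
      · intro a ha
        have ha' : (QuotientGroup.mk a : G ⧸ L) ∈ QuotientGroup.mk '' Sinv := ha
        obtain ⟨b, hb, hba⟩ := ha'
        obtain ⟨y, hy, rfl⟩ := hb
        have hl : y * a ∈ L := by
          have h := QuotientGroup.eq.1 hba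
          rwa [inv_inv] at h
        have hinv : a⁻¹ ∈ B₀.1.carrier := by
          have hl' : (y * a)⁻¹ ∈ L := inv_mem hl
          have hmem := MulAction.mem_stabilizer_iff.1 hl'
          rw [← hmem]
          refine Set.mem_smul_set.2 ⟨y, hy, ?_⟩
          rw [smul_eq_mul]
          group
        exact ⟨a⁻¹, hinv, inv_inv a⟩
      · exact Set.subset_preimage_image _ _
    have hc := Nat.card_congr
      (QuotientGroup.preimageMkEquivSubgroupProdSet L (QuotientGroup.mk '' Sinv))
    rw [hsat, Nat.card_prod] at hc
    have hSinv : Nat.card Sinv = Nat.card B₀.1.carrier := by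
      rw [Nat.card_coe_set_eq, Nat.card_coe_set_eq, hSinvdef]
      exact Set.ncard_image_of_injective _ inv_injective
    exact ⟨_, by rw [← hSinv, hc]⟩
  -- K is normal
  have hKnormal : K.Normal := by
    rw [hK]
    apply stmt17_closure_normal_of_conj
    rintro s ⟨D, hD, u, hu, v, hv, rfl⟩ g
    exact ⟨D, hD, g * u * g⁻¹, stmt17_conj_mem_carrier hu g,
      g * v * g⁻¹, stmt17_conj_mem_carrier hv g, by group⟩
  -- M is normal
  have hMnormal : M.Normal := by
    rw [hM]
    apply stmt17_closure_normal_of_conj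
    rintro s ⟨D, hD, hs⟩ g
    exact ⟨D, hD, stmt17_conj_mem_carrier hs g⟩
  -- K ≤ M
  have hKM : K ≤ M := by
    rw [hK]
    refine (Subgroup.closure_le _).2 ?_
    rintro s ⟨D, hD, u, hu, v, hv, rfl⟩
    have huM : u ∈ M := by rw [hM]; exact Subgroup.subset_closure ⟨D, hD, hu⟩
    have hvM : v ∈ M := by rw [hM]; exact Subgroup.subset_closure ⟨D, hD, hv⟩
    exact mul_mem (inv_mem huM) hvM
  -- |K| divides |B₀|
  have hKcards : Nat.card K ∣ Nat.card B₀.1.carrier :=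
    (Subgroup.card_dvd_of_le hKL).trans hLdvd
  -- K centralizes every far class
  haveI : K.Normal := hKnormal
  haveI : M.Normal := hMnormal
  have hKcent : ∀ D : NCClass G N, 2 ≤ (GammaG G N).dist B₀ D → ∀ d ∈ D.1.carrier,
      K ≤ Subgroup.centralizer {d} := by
    intro D hD d hd
    have h1 : (Subgroup.centralizer {d}).relIndex K ∣ Nat.card K :=
      Subgroup.index_dvd_card ((Subgroup.centralizer {d}).subgroupOf K)
    have h2 : (Subgroup.centralizer {d}).relIndex K ∣ Nat.card D.1.carrier := by
      rw [hcardD D d hd]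
      exact stmt17_relindex_dvd_index_of_normal K (Subgroup.centralizer {d})
    have hg : Nat.gcd (Nat.card B₀.1.carrier) (Nat.card D.1.carrier) = 1 := hfar D hD
    have h4 : (Subgroup.centralizer {d}).relIndex K ∣ 1 := by
      rw [← hg]
      exact Nat.dvd_gcd (h1.trans hKcards) h2
    exact Subgroup.relIndex_eq_one.1 (Nat.dvd_one.1 h4)
  -- K centralizes M
  have hMleCentK : M ≤ Subgroup.centralizer (K : Set G) := by
    rw [hM]
    refine (Subgroup.closure_le _).2 ?_
    rintro u ⟨D, hD, hu⟩
    rw [SetLike.mem_coe, Subgroup.mem_centralizer_iff]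
    intro k hk
    exact ((Subgroup.mem_centralizer_iff.1 (hKcent D hD u hu hk)) u rfl).symm
  have hKcentM : K ≤ Subgroup.centralizer (M : Set G) :=
    Subgroup.le_centralizer_iff.1 hMleCentK
  -- far-class elements centralize M
  have habel : ∀ D : NCClass G N, 2 ≤ (GammaG G N).dist B₀ D → ∀ d ∈ D.1.carrier,
      ∀ m ∈ M, d * m = m * d := by
    intro D hD d hd
    have hgen : ∀ w : G, d⁻¹ * w * d * w⁻¹ ∈ K := by
      intro w
      rw [hK]
      exact Subgroup.subset_closure ⟨D, hD, d, hd, w * d * w⁻¹,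
        stmt17_conj_mem_carrier hd w, by group⟩
    have hcomm : ∀ k ∈ K, ∀ m ∈ M, m * k * m⁻¹ = k := by
      intro k hk m hm
      have h := Subgroup.mem_centralizer_iff.1 (hKcentM hk) m hm
      rw [h, mul_inv_cancel_right]
    let ψ : ↥M →* G := MonoidHom.mk' (fun m => d⁻¹ * (m : G) * d * (m : G)⁻¹) (by
      intro m n
      have h1 : (↑m : G) * (d⁻¹ * ↑n * d * (↑n : G)⁻¹) * (↑m : G)⁻¹
          = d⁻¹ * ↑n * d * (↑n : G)⁻¹ := hcomm _ (hgen ↑n) ↑m m.2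
      show d⁻¹ * ((m * n : ↥M) : G) * d * (((m * n : ↥M) : G))⁻¹
          = (d⁻¹ * (↑m : G) * d * (↑m : G)⁻¹) * (d⁻¹ * (↑n : G) * d * (↑n : G)⁻¹)
      rw [show ((m * n : ↥M) : G) = (↑m : G) * ↑n from rfl, mul_inv_rev, ← h1]
      group)
    have hrange : ψ.range ≤ K := by
      rintro _ ⟨m, rfl⟩
      exact hgen ↑m
    have hcardrange : Nat.card ψ.range = (Subgroup.centralizer {d}).relIndex M := by
      have hker : ψ.ker = (Subgroup.centralizer {d}).subgroupOf M := by
        ext m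
        rw [MonoidHom.mem_ker, Subgroup.mem_subgroupOf,
          Subgroup.mem_centralizer_singleton_iff]
        show d⁻¹ * (m : G) * d * (m : G)⁻¹ = 1 ↔ _
        constructor
        · intro h
          have h2 : d⁻¹ * (m : G) * d = (m : G) := by rwa [mul_inv_eq_one] at h
          have h3 : d * (d⁻¹ * (m : G) * d) = d * (m : G) := congrArg _ h2
          rw [show d * (d⁻¹ * (m : G) * d) = (m : G) * d from by group] at h3
          exact h3
        · intro h
          have h2 : d⁻¹ * (m : G) * d = (m : G) := by
            rw [show d⁻¹ * (m : G) * d = d⁻¹ * ((m : G) * d) from by group, h]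
            group
          rw [h2, mul_inv_cancel]
      rw [← Subgroup.index_ker, hker]
      rfl
    have hd1 : Nat.card ψ.range ∣ Nat.card D.1.carrier := by
      rw [hcardrange, hcardD D d hd]
      exact stmt17_relindex_dvd_index_of_normal M (Subgroup.centralizer {d})
    have hd2 : Nat.card ψ.range ∣ Nat.card B₀.1.carrier :=
      (Subgroup.card_dvd_of_le hrange).trans hKcards
    have hg : Nat.gcd (Nat.card B₀.1.carrier) (Nat.card D.1.carrier) = 1 := hfar D hD
    have hone : Nat.card ψ.range = 1 := Nat.dvd_one.1 (by rw [← hg]; exact Nat.dvd_gcd hd2 hd1)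
    have hbot : ψ.range = ⊥ := Subgroup.card_eq_one.1 hone
    intro m hm
    have hψ : ψ ⟨m, hm⟩ = 1 := by
      have h : ψ ⟨m, hm⟩ ∈ ψ.range := ⟨⟨m, hm⟩, rfl⟩
      rw [hbot] at h
      rwa [Subgroup.mem_bot] at h
    have h2 : d⁻¹ * m * d = m := by
      have : d⁻¹ * m * d * m⁻¹ = 1 := hψ
      rwa [mul_inv_eq_one] at this
    have h3 : d * (d⁻¹ * m * d) = d * m := congrArg _ h2
    rw [show d * (d⁻¹ * m * d) = m * d from by group] at h3
    exact h3.symm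
  -- commutators land in K
  have hcommK : ∀ m ∈ M, ∀ g : G, ⁅m, g⁆ ∈ K := by
    intro m hm
    rw [hM] at hm
    induction hm using Subgroup.closure_induction with
    | mem u hu =>
        obtain ⟨D, hD, hu'⟩ := hu
        intro g
        have hgen : (g * u * g⁻¹)⁻¹ * u ∈ K := by
          rw [hK]
          exact Subgroup.subset_closure ⟨D, hD, g * u * g⁻¹,
            stmt17_conj_mem_carrier hu' g, u, hu', rfl⟩
        have : ⁅u, g⁆ = u * ((g * u * g⁻¹)⁻¹ * u) * u⁻¹ := by
          rw [commutatorElement_def]; group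
        rw [this]
        exact hKnormal.conj_mem _ hgen u
    | one =>
        intro g
        rw [show ⁅(1 : G), g⁆ = 1 from by rw [commutatorElement_def]; group]
        exact one_mem K
    | mul a b _ _ iha ihb =>
        intro g
        have : ⁅a * b, g⁆ = (a * ⁅b, g⁆ * a⁻¹) * ⁅a, g⁆ := by
          simp only [commutatorElement_def]; group
        rw [this]
        exact mul_mem (hKnormal.conj_mem _ (ihb g) a) (iha g)
    | inv a _ iha =>
        intro g
        have : ⁅a⁻¹, g⁆ = a⁻¹ * ⁅a, g⁆⁻¹ * (a⁻¹)⁻¹ := by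
          simp only [commutatorElement_def]; group
        rw [this]
        exact hKnormal.conj_mem _ (inv_mem (iha g)) a⁻¹
  -- K = [M, ⊤]
  have hKcomm : K = ⁅M, (⊤ : Subgroup G)⁆ := by
    apply le_antisymm
    · rw [hK]
      refine (Subgroup.closure_le _).2 ?_
      rintro s ⟨D, hD, u, hu, v, hv, rfl⟩
      obtain ⟨w, hw⟩ := stmt17_exists_conj hu hv
      have huM : u ∈ M := by rw [hM]; exact Subgroup.subset_closure ⟨D, hD, hu⟩
      have : u⁻¹ * v = ⁅u⁻¹, w⁆ := by
        rw [commutatorElement_def, ← hw]; group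
      rw [SetLike.mem_coe, this]
      exact Subgroup.commutator_mem_commutator (inv_mem huM) (Subgroup.mem_top w)
    · exact Subgroup.commutator_le.2 fun m hm g _ => hcommK m hm g
  -- M is commutative
  have hcomm : ∀ a ∈ M, ∀ b ∈ M, a * b = b * a := by
    intro a ha
    rw [hM] at ha
    induction ha using Subgroup.closure_induction with
    | mem x hx =>
        obtain ⟨D, hD, hx'⟩ := hx
        intro b hb
        exact habel D hD x hx' b hb
    | one => intro b _; rw [one_mul, mul_one]
    | mul x y _ _ ihx ihy =>
        intro b hb
        have h1 : Commute x b := ihx b hb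
        have h2 : Commute y b := ihy b hb
        exact h1.mul_left h2
    | inv x _ ihx =>
        intro b hb
        exact (Commute.inv_left (ihx b hb) : Commute x⁻¹ b)
  exact ⟨hMnormal, hKnormal, hKcomm, le_inf hKM hKcentM, hcomm⟩
end
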